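/- arXiv:2405.00731 — 5 statements merged into one kernel-verified Lean document; each statement's English description precedes it below -/
import Mathlib

section
/- Let α, δ be complex numbers with Re(α) > 0, and let z be any complex number. Then the series ∑_{k=0}^∞ z^k / Γ(αk + δ) (the two-parametric Mittag-Leffler series, with the convention that a term vanishes when αk + δ is a pole of the Gamma function) is absolutely convergent, i.e. the family (z^k / Γ(αk + δ))_{k∈ℕ} is summable. -/
open Filter Topology MeasureTheory Set intervalIntegral

section MittagLefflerAux

private 
lemma realBeta_tendsto {a : ℝ} (ha : 0 < a) :
    Tendsto (fun x : ℝ => Real.Gamma x * Real.Gamma a / Real.Gamma (x + a)) atTop (𝓝 0) := by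
  have hpos : ∀ᶠ x : ℝ in atTop, 0 ≤ Real.Gamma x * Real.Gamma a / Real.Gamma (x + a) := by
    filter_upwards [eventually_gt_atTop (0 : ℝ)] with x hx
    have h1 := Real.Gamma_pos_of_pos hx
    have h2 := Real.Gamma_pos_of_pos ha
    have h3 := Real.Gamma_pos_of_pos (by linarith : (0:ℝ) < x + a)
    positivity
  rcases le_or_gt 1 a with h1 | h1
  · -- a ≥ 1 : Γ(x+a) ≥ Γ(x+1) = x Γ x
    refine squeeze_zero' (g := fun x => Real.Gamma a / x) hpos ?_ ?_
    · filter_upwards [eventually_ge_atTop (2 : ℝ)] with x hx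
      have hx0 : (0:ℝ) < x := by linarith
      have hmono : Real.Gamma (x + 1) ≤ Real.Gamma (x + a) := by
        rcases eq_or_lt_of_le h1 with rfl | h1'
        · exact le_rfl
        · exact le_of_lt (Real.Gamma_strictMonoOn_Ici (by simp; linarith) (by simp; linarith)
            (by linarith))
      have hG1 : Real.Gamma (x + 1) = x * Real.Gamma x := Real.Gamma_add_one hx0.ne'
      have hGx : 0 < Real.Gamma x := Real.Gamma_pos_of_pos hx0
      have hGa : 0 < Real.Gamma a := Real.Gamma_pos_of_pos ha
      have hG2 : 0 < Real.Gamma (x + a) := Real.Gamma_pos_of_pos (by linarith)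
      calc Real.Gamma x * Real.Gamma a / Real.Gamma (x + a)
          ≤ Real.Gamma x * Real.Gamma a / Real.Gamma (x + 1) := by
            apply div_le_div_of_nonneg_left (by positivity) (by rw [hG1]; positivity) hmono
        _ = Real.Gamma a / x := by rw [hG1]; field_simp
    · exact Tendsto.div_atTop tendsto_const_nhds tendsto_id
  · -- a < 1 : log-convexity interpolation
    refine squeeze_zero' (g := fun x => Real.Gamma a * 2 ^ (1-a) * x ^ (-a)) hpos ?_ ?_
    · filter_upwards [eventually_ge_atTop (max a 2)] with x hx
      have hxa : a ≤ x := le_trans (le_max_left _ _) hx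
      have hx2 : (2:ℝ) ≤ x := le_trans (le_max_right _ _) hx
      have hx0 : (0:ℝ) < x := by linarith
      have hb : 0 < 1 - a := by linarith
      have key := Real.Gamma_mul_add_mul_le_rpow_Gamma_mul_rpow_Gamma
        (by linarith : (0:ℝ) < x + a) (by linarith : (0:ℝ) < x + a + 1) ha hb (by ring)
      have hpt : a * (x + a) + (1 - a) * (x + a + 1) = x + 1 := by ring
      rw [hpt] at key
      have hGxa : 0 < Real.Gamma (x + a) := Real.Gamma_pos_of_pos (by linarith)
      have hrec : Real.Gamma (x + a + 1) = (x + a) * Real.Gamma (x + a) :=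
        Real.Gamma_add_one (by positivity)
      have key2 : x * Real.Gamma x ≤ Real.Gamma (x + a) * (x + a) ^ (1 - a) := by
        have := key
        rw [Real.Gamma_add_one hx0.ne', hrec, Real.mul_rpow (by positivity) hGxa.le] at this
        calc x * Real.Gamma x ≤ Real.Gamma (x+a) ^ a * ((x+a) ^ (1-a) * Real.Gamma (x+a) ^ (1-a)) := this
          _ = (Real.Gamma (x+a) ^ a * Real.Gamma (x+a) ^ (1-a)) * (x+a) ^ (1-a) := by ring
          _ = Real.Gamma (x + a) * (x + a) ^ (1 - a) := by
              rw [← Real.rpow_add hGxa]; norm_num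
      have hGx : 0 < Real.Gamma x := Real.Gamma_pos_of_pos hx0
      have hGa : 0 < Real.Gamma a := Real.Gamma_pos_of_pos ha
      have step1 : Real.Gamma x * Real.Gamma a / Real.Gamma (x + a)
          ≤ Real.Gamma a * ((x + a) ^ (1 - a) / x) := by
        rw [div_le_iff₀ hGxa]
        have : Real.Gamma x ≤ Real.Gamma (x + a) * (x + a) ^ (1 - a) / x := by
          rw [le_div_iff₀ hx0]; linarith [key2]
        calc Real.Gamma x * Real.Gamma a ≤ (Real.Gamma (x+a) * (x+a)^(1-a) / x) * Real.Gamma a := by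
              exact mul_le_mul_of_nonneg_right this hGa.le
          _ = Real.Gamma a * ((x + a) ^ (1 - a) / x) * Real.Gamma (x + a) := by ring
      refine step1.trans ?_
      have hxa2 : x + a ≤ 2 * x := by linarith
      have h2x : (x + a) ^ (1 - a) ≤ (2 * x) ^ (1 - a) :=
        Real.rpow_le_rpow (by linarith) hxa2 hb.le
      have : (2 * x) ^ (1 - a) = 2 ^ (1 - a) * x ^ (1 - a) :=
        Real.mul_rpow (by norm_num) hx0.le
      calc Real.Gamma a * ((x + a) ^ (1 - a) / x)
          ≤ Real.Gamma a * (2 ^ (1-a) * x ^ (1 - a) / x) := by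
            gcongr
            exact h2x.trans_eq this
        _ = Real.Gamma a * 2 ^ (1-a) * x ^ (-a) := by
            rw [mul_assoc]; congr 1
            rw [div_eq_mul_inv, ← Real.rpow_neg_one x, mul_assoc, ← Real.rpow_add hx0]
            rw [show (1:ℝ) - a + -1 = -a by ring]
    · have : Tendsto (fun x : ℝ => x ^ (-a)) atTop (𝓝 0) := tendsto_rpow_neg_atTop ha
      simpa using this.const_mul (Real.Gamma a * 2 ^ (1-a))

private 
lemma norm_betaIntegral_le {s w : ℂ} (hs : 0 < s.re) (hw : 0 < w.re) :
    ‖Complex.betaIntegral s w‖ ≤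
      Real.Gamma s.re * Real.Gamma w.re / Real.Gamma (s.re + w.re) := by
  set x := s.re with hx
  set a := w.re with hab
  have hxa : (0:ℝ) < x + a := by linarith
  -- the comparison integrand
  set g : ℝ → ℂ := fun t => (t:ℂ) ^ ((x:ℂ) - 1) * (1 - (t:ℂ)) ^ ((a:ℂ) - 1) with hg
  have hgint : IntervalIntegrable g volume 0 1 :=
    Complex.betaIntegral_convergent (by simpa using hs) (by simpa using hw)
  -- a.e. facts on the interval
  have h1 : ∀ᵐ t : ℝ ∂volume, t ≠ (1:ℝ) := by
    rw [MeasureTheory.ae_iff]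
    simpa using measure_singleton (1:ℝ)
  have hae2 : ∀ᵐ t : ℝ ∂volume, t ∈ Set.uIoc (0:ℝ) 1 → t ∈ Set.Ioo (0:ℝ) 1 := by
    filter_upwards [h1] with t ht1 ht
    rw [Set.uIoc_of_le (by norm_num : (0:ℝ) ≤ 1)] at ht
    exact ⟨ht.1, lt_of_le_of_ne ht.2 ht1⟩
  have hae : ∀ᵐ t ∂(volume.restrict (Set.uIoc (0:ℝ) 1)), t ∈ Set.Ioo (0:ℝ) 1 := by
    filter_upwards [ae_restrict_mem measurableSet_uIoc, ae_restrict_of_ae hae2] with t ht h2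
    exact h2 ht
  -- pointwise identification of ‖g t‖
  have hnorm_g : ∀ t : ℝ, t ∈ Set.Ioo (0:ℝ) 1 →
      g t = ((t ^ (x - 1) * (1 - t) ^ (a - 1) : ℝ) : ℂ) ∧
      ‖g t‖ = t ^ (x - 1) * (1 - t) ^ (a - 1) := by
    intro t ht
    have ht0 : (0:ℝ) < t := ht.1
    have ht1 : (0:ℝ) < 1 - t := by linarith [ht.2]
    have e1 : (t:ℂ) ^ ((x:ℂ) - 1) = ((t ^ (x - 1) : ℝ) : ℂ) := by
      rw [Complex.ofReal_cpow ht0.le]; push_cast; ring_nf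
    have e2 : (1 - (t:ℂ)) ^ ((a:ℂ) - 1) = (((1 - t) ^ (a - 1) : ℝ) : ℂ) := by
      rw [show (1 - (t:ℂ)) = (((1:ℝ) - t : ℝ) : ℂ) by push_cast; ring,
        Complex.ofReal_cpow ht1.le]
      push_cast; ring_nf
    constructor
    · rw [hg]; simp only [e1, e2]; push_cast; ring
    · rw [hg]; simp only [e1, e2, ← Complex.ofReal_mul, Complex.norm_real]
      rw [Real.norm_of_nonneg (by positivity)]
  -- the norm bound against ∫ ‖g‖
  have hR : ‖Complex.betaIntegral s w‖ ≤ ∫ t in (0:ℝ)..1, ‖g t‖ := by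
    rw [Complex.betaIntegral]
    refine le_trans (intervalIntegral.norm_integral_le_of_norm_le (g := fun t => ‖g t‖) zero_le_one ?_
      hgint.norm) le_rfl
    rw [← Set.uIoc_of_le (zero_le_one : (0:ℝ) ≤ 1), ← ae_restrict_iff' measurableSet_uIoc]
    filter_upwards [hae] with t ht
    obtain ⟨_, hgn⟩ := hnorm_g t ht
    have ht0 : (0:ℝ) < t := ht.1
    have ht1 : (0:ℝ) < 1 - t := by linarith [ht.2]
    rw [hgn, norm_mul]
    have e1 : ‖(t:ℂ) ^ (s - 1)‖ = t ^ (x - 1) := by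
      rw [Complex.norm_cpow_eq_rpow_re_of_pos ht0]
      congr 1
    have e2 : ‖(1 - (t:ℂ)) ^ (w - 1)‖ = (1 - t) ^ (a - 1) := by
      rw [show (1 - (t:ℂ)) = (((1:ℝ) - t : ℝ) : ℂ) by push_cast; ring,
        Complex.norm_cpow_eq_rpow_re_of_pos ht1]
      congr 1
    rw [e1, e2]
  -- identify ∫ ‖g‖ with the real Beta value = Gamma ratio
  have hbeta : Complex.betaIntegral (x:ℂ) (a:ℂ) = ((∫ t in (0:ℝ)..1, ‖g t‖ : ℝ) : ℂ) := by
    rw [Complex.betaIntegral, ← intervalIntegral.integral_ofReal]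
    apply intervalIntegral.integral_congr_ae
    filter_upwards [hae2] with t ht' htm
    have ht := ht' htm
    obtain ⟨hge, hgn⟩ := hnorm_g t ht
    rw [hgn]
    rw [show ((t ^ (x - 1) * (1 - t) ^ (a - 1) : ℝ) : ℂ) = g t from hge.symm, hg]
  have hid := Complex.Gamma_mul_Gamma_eq_betaIntegral
    (s := (x:ℂ)) (t := (a:ℂ)) (by simpa using hs) (by simpa using hw)
  rw [hbeta, Complex.Gamma_ofReal, Complex.Gamma_ofReal,
    show ((x:ℂ) + (a:ℂ)) = ((x + a : ℝ) : ℂ) by push_cast; ring, Complex.Gamma_ofReal,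
    ← Complex.ofReal_mul, ← Complex.ofReal_mul] at hid
  have hid' : Real.Gamma x * Real.Gamma a = Real.Gamma (x + a) * ∫ t in (0:ℝ)..1, ‖g t‖ :=
    mod_cast hid
  have hGxa : 0 < Real.Gamma (x + a) := Real.Gamma_pos_of_pos hxa
  have : (∫ t in (0:ℝ)..1, ‖g t‖) = Real.Gamma x * Real.Gamma a / Real.Gamma (x + a) := by
    field_simp [hid']
    linarith [hid']
  linarith [hR, this.symm.le]

end MittagLefflerAux

/-- The two-parametric Mittag-Leffler series `∑ₖ zᵏ / Γ(αk + δ)` is absolutely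
convergent (summable) for any `z ∈ ℂ`, provided `Re α > 0`.  Here `Complex.Gamma`
vanishes at the poles of the Gamma function, and division by zero is zero, which
realizes the convention that such terms vanish. -/
theorem mittagLeffler_summable (α δ z : ℂ) (hα : 0 < α.re) :
    Summable (fun k : ℕ => z ^ k / Complex.Gamma (α * k + δ)) := by
  set a := α.re with ha
  set c := δ.re with hc
  have hre : ∀ k : ℕ, (α * k + δ).re = a * k + c := by
    intro k; simp [Complex.add_re, Complex.mul_re, ha, hc]
  have hx_tendsto : Tendsto (fun k : ℕ => a * k + c) atTop atTop := by
    apply tendsto_atTop_add_const_right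
    exact Tendsto.const_mul_atTop hα tendsto_natCast_atTop_atTop
  have hBt : Tendsto
      (fun k : ℕ => Real.Gamma (a * k + c) * Real.Gamma a / Real.Gamma ((a * k + c) + a))
      atTop (𝓝 0) := (realBeta_tendsto hα).comp hx_tendsto
  have hGα : Complex.Gamma α ≠ 0 := Complex.Gamma_ne_zero_of_re_pos hα
  have hNA : 0 < ‖Complex.Gamma α‖ := norm_pos_iff.mpr hGα
  set ε : ℝ := ‖Complex.Gamma α‖ / (2 * (‖z‖ + 1)) with hε
  have hεpos : 0 < ε := by positivity
  have hev1 : ∀ᶠ k : ℕ in atTop,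
      Real.Gamma (a * k + c) * Real.Gamma a / Real.Gamma ((a * k + c) + a) < ε :=
    hBt.eventually_lt_const hεpos
  have hev2 : ∀ᶠ k : ℕ in atTop, 0 < a * k + c := hx_tendsto.eventually_gt_atTop 0
  apply summable_of_ratio_norm_eventually_le (r := 1/2) (by norm_num)
  filter_upwards [hev1, hev2] with k hkε hk0
  set s : ℂ := α * k + δ with hsdef
  have hsre : 0 < s.re := by rw [hsdef, hre]; exact hk0
  have hsαre : 0 < (s + α).re := by rw [Complex.add_re]; linarith
  have hnext : α * (↑(k + 1) : ℂ) + δ = s + α := by push_cast; ring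
  have hG1 : Complex.Gamma s ≠ 0 := Complex.Gamma_ne_zero_of_re_pos hsre
  have hG2 : Complex.Gamma (s + α) ≠ 0 := Complex.Gamma_ne_zero_of_re_pos hsαre
  have hN1 : 0 < ‖Complex.Gamma s‖ := norm_pos_iff.mpr hG1
  have hN2 : 0 < ‖Complex.Gamma (s + α)‖ := norm_pos_iff.mpr hG2
  have hid := Complex.Gamma_mul_Gamma_eq_betaIntegral hsre hα
  have hidn : ‖Complex.Gamma s‖ * ‖Complex.Gamma α‖ =
      ‖Complex.Gamma (s + α)‖ * ‖Complex.betaIntegral s α‖ := by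
    rw [← norm_mul, ← norm_mul, hid]
  have hβ : ‖Complex.betaIntegral s α‖ < ε := by
    refine lt_of_le_of_lt (norm_betaIntegral_le hsre hα) ?_
    have : s.re = a * k + c := by rw [hsdef, hre]
    rw [this]; exact hkε
  -- core inequality
  rw [hnext]
  have hz : (0:ℝ) ≤ ‖z‖ := norm_nonneg z
  have hN1eq : ‖Complex.Gamma s‖ =
      ‖Complex.Gamma (s + α)‖ * ‖Complex.betaIntegral s α‖ / ‖Complex.Gamma α‖ := by
    rw [eq_div_iff hNA.ne']; exact hidn
  have hstep : ‖z‖ * (‖Complex.betaIntegral s α‖ / ‖Complex.Gamma α‖) ≤ 1/2 := by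
    have h1 : ‖Complex.betaIntegral s α‖ / ‖Complex.Gamma α‖ ≤ 1 / (2 * (‖z‖ + 1)) := by
      rw [div_le_div_iff₀ hNA (by positivity)]
      calc ‖Complex.betaIntegral s α‖ * (2 * (‖z‖ + 1))
          ≤ ε * (2 * (‖z‖ + 1)) := by
            apply mul_le_mul_of_nonneg_right hβ.le (by positivity)
        _ = 1 * ‖Complex.Gamma α‖ := by rw [hε]; field_simp
    calc ‖z‖ * (‖Complex.betaIntegral s α‖ / ‖Complex.Gamma α‖)
        ≤ ‖z‖ * (1 / (2 * (‖z‖ + 1))) := by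
          exact mul_le_mul_of_nonneg_left h1 hz
      _ ≤ 1/2 := by rw [mul_div_assoc'] ; rw [div_le_div_iff₀ (by positivity) (by norm_num)]; nlinarith
  have key : ‖z‖ ^ (k+1) * ‖Complex.Gamma s‖ ≤ 1/2 * ‖z‖ ^ k * ‖Complex.Gamma (s + α)‖ := by
    calc ‖z‖ ^ (k+1) * ‖Complex.Gamma s‖
        = (‖z‖ ^ k * ‖Complex.Gamma (s + α)‖) *
            (‖z‖ * (‖Complex.betaIntegral s α‖ / ‖Complex.Gamma α‖)) := by
          rw [hN1eq, pow_succ]; ring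
      _ ≤ (‖z‖ ^ k * ‖Complex.Gamma (s + α)‖) * (1/2) := by
          exact mul_le_mul_of_nonneg_left hstep (by positivity)
      _ = 1/2 * ‖z‖ ^ k * ‖Complex.Gamma (s + α)‖ := by ring
  rw [norm_div, norm_div, norm_pow, norm_pow]
  have hrw : (1:ℝ)/2 * (‖z‖ ^ k / ‖Complex.Gamma s‖) = (1/2 * ‖z‖ ^ k) / ‖Complex.Gamma s‖ := by
    ring
  rw [hrw, div_le_div_iff₀ hN2 hN1]
  linarith [key]
end

section
/- Let β > 0 and μ ≥ 0. Then for every t > 0, the function t ↦ E_β(−μ t^β) = ∑_{k=0}^∞ (−μ)^k t^{βk}/Γ(βk+1) is differentiable at t and its derivative equals d/dt E_β(−μ t^β) = −μ t^{β−1} E_{β,β}(−μ t^β), where E_{β,β}(z) = ∑_{k=0}^∞ z^k / Γ(βk + β). -/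
open Real Filter

lemma gamma_ratio_mono {β x y : ℝ} (hβ : 0 < β) (hx : 0 < x) (hxy : x ≤ y) :
    Real.Gamma (x + β) * Real.Gamma y ≤ Real.Gamma x * Real.Gamma (y + β) := by
  have hy : 0 < y := lt_of_lt_of_le hx hxy
  have conv := Real.convexOn_log_Gamma
  have h1 := conv.secant_mono (a := x) (x := x + β) (y := y + β)
    (by simpa using hx) (by simp; linarith) (by simp; linarith)
    (by intro h; nlinarith [congrArg (· - x) h]) (by intro h; nlinarith [congrArg (· - x) h])
    (by linarith)
  have h2 := conv.secant_mono (a := y + β) (x := x) (y := y)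
    (by simp; linarith) (by simpa using hx) (by simpa using hy)
    (by intro h; nlinarith) (by intro h; nlinarith) hxy
  simp only [Function.comp_apply] at h1 h2
  set L : ℝ → ℝ := fun z => Real.log (Real.Gamma z) with hL
  have e1 : (L (x + β) - L x) / (x + β - x) = (L (x + β) - L x) / β := by ring_nf
  have e2 : (L x - L (y + β)) / (x - (y + β)) = (L (y + β) - L x) / (y + β - x) := by
    rw [← neg_div_neg_eq]; ring_nf
  have e3 : (L y - L (y + β)) / (y - (y + β)) = (L (y + β) - L y) / β := by
    rw [← neg_div_neg_eq]; ring_nf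
  have key : (L (x + β) - L x) / β ≤ (L (y + β) - L y) / β := by
    calc (L (x + β) - L x) / β = (L (x + β) - L x) / (x + β - x) := by ring_nf
    _ ≤ (L (y + β) - L x) / (y + β - x) := h1
    _ = (L x - L (y + β)) / (x - (y + β)) := e2.symm
    _ ≤ (L y - L (y + β)) / (y - (y + β)) := h2
    _ = (L (y + β) - L y) / β := e3
  have key2 : L (x + β) + L y ≤ L x + L (y + β) := by
    have := (div_le_div_iff_of_pos_right hβ).mp key
    linarith
  have p1 : 0 < Real.Gamma (x + β) := Real.Gamma_pos_of_pos (by linarith)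
  have p2 : 0 < Real.Gamma y := Real.Gamma_pos_of_pos hy
  have p3 : 0 < Real.Gamma x := Real.Gamma_pos_of_pos hx
  have p4 : 0 < Real.Gamma (y + β) := Real.Gamma_pos_of_pos (by linarith)
  have : Real.log (Real.Gamma (x + β) * Real.Gamma y)
      ≤ Real.log (Real.Gamma x * Real.Gamma (y + β)) := by
    rw [Real.log_mul p1.ne' p2.ne', Real.log_mul p3.ne' p4.ne']
    exact key2
  exact (Real.log_le_log_iff (by positivity) (by positivity)).mp this

lemma gamma_pow_aux {β : ℝ} (hβ : 0 < β) :
    ∀ (n : ℕ) (x y : ℝ), 0 < x → x + n * β ≤ y + β →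
    Real.Gamma (x + n * β) * Real.Gamma y ^ n ≤ Real.Gamma x * Real.Gamma (y + β) ^ n := by
  intro n
  induction n with
  | zero => intro x y hx _; simp
  | succ n ih =>
    intro x y hx h
    have hcast : ((n + 1 : ℕ) : ℝ) = (n : ℝ) + 1 := by push_cast; ring
    have hxny : x + n * β ≤ y := by
      have : x + ((n : ℝ) + 1) * β ≤ y + β := by rw [← hcast]; exact h
      nlinarith
    have hxn : 0 < x + n * β := by positivity
    have hy : 0 < y := lt_of_lt_of_le hxn hxny
    have key := gamma_ratio_mono hβ hxn hxny
    have ihy := ih x y hx (by linarith)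
    have p2 : (0:ℝ) ≤ Real.Gamma y ^ n := (pow_nonneg (Real.Gamma_pos_of_pos hy).le n)
    have p4 : (0:ℝ) ≤ Real.Gamma (y + β) := (Real.Gamma_pos_of_pos (by linarith)).le
    calc Real.Gamma (x + (n + 1 : ℕ) * β) * Real.Gamma y ^ (n + 1)
        = (Real.Gamma ((x + n * β) + β) * Real.Gamma y) * Real.Gamma y ^ n := by
          rw [hcast]; ring_nf
    _ ≤ (Real.Gamma (x + n * β) * Real.Gamma (y + β)) * Real.Gamma y ^ n := by
          exact mul_le_mul_of_nonneg_right key p2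
    _ = (Real.Gamma (x + n * β) * Real.Gamma y ^ n) * Real.Gamma (y + β) := by ring
    _ ≤ (Real.Gamma x * Real.Gamma (y + β) ^ n) * Real.Gamma (y + β) :=
          mul_le_mul_of_nonneg_right ihy p4
    _ = Real.Gamma x * Real.Gamma (y + β) ^ (n + 1) := by ring

lemma gamma_growth {β : ℝ} (hβ : 0 < β) (C : ℝ) :
    ∀ᶠ z in atTop, C * Real.Gamma z ≤ Real.Gamma (z + β) := by
  set n : ℕ := ⌈1 / β⌉₊ with hn
  have hn0 : n ≠ 0 := by
    have : (0:ℝ) < 1 / β := by positivity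
    simpa [hn] using Nat.ceil_pos.mpr this |>.ne'
  have hnβ : 1 ≤ (n : ℝ) * β := by
    have h1 : (1 / β : ℝ) ≤ n := Nat.le_ceil _
    calc (1:ℝ) = (1 / β) * β := by field_simp
    _ ≤ (n : ℝ) * β := by nlinarith
  set D : ℝ := max C 0 with hD
  filter_upwards [eventually_ge_atTop (max 2 (D ^ n) + n * β)] with z hz
  set x : ℝ := z - n * β with hx
  have hx2 : 2 ≤ x := by
    have := le_max_left 2 (D ^ n); simp only [hx]; linarith [le_trans (le_max_left 2 (D^n)) (by linarith [hz] : max 2 (D^n) ≤ z - n*β)]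
  have hxC : D ^ n ≤ x := by
    have := le_max_right 2 (D ^ n)
    simp only [hx]; linarith [hz]
  have hx0 : 0 < x := by linarith
  have hxz : x + n * β = z := by simp [hx]
  have hz2 : (2:ℝ) ≤ z := by linarith [hnβ]
  have hzpos : (0:ℝ) < z := by linarith
  have Q := gamma_pow_aux hβ n x z hx0 (by rw [hxz]; linarith)
  rw [hxz] at Q
  have hmono : Real.Gamma (x + 1) ≤ Real.Gamma z := by
    rcases eq_or_lt_of_le (show x + 1 ≤ z by rw [← hxz]; linarith) with h | h
    · rw [h]
    · exact (Real.Gamma_strictMonoOn_Ici (by simp; linarith) (by simpa using hz2) h).le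
  rw [Real.Gamma_add_one hx0.ne'] at hmono
  have pΓx : 0 < Real.Gamma x := Real.Gamma_pos_of_pos hx0
  have pΓz : 0 < Real.Gamma z := Real.Gamma_pos_of_pos hzpos
  have pΓzb : 0 < Real.Gamma (z + β) := Real.Gamma_pos_of_pos (by linarith)
  -- x * Γz^n ≤ Γ(z+β)^n
  have step : x * Real.Gamma z ^ n ≤ Real.Gamma (z + β) ^ n := by
    have h1 : x * Real.Gamma x * Real.Gamma z ^ n ≤ Real.Gamma z * Real.Gamma z ^ n :=
      mul_le_mul_of_nonneg_right hmono (by positivity)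
    have h2 : Real.Gamma z * Real.Gamma z ^ n ≤ Real.Gamma x * Real.Gamma (z + β) ^ n := Q
    have h3 : Real.Gamma x * (x * Real.Gamma z ^ n) ≤ Real.Gamma x * Real.Gamma (z + β) ^ n := by
      nlinarith
    exact (mul_le_mul_iff_right₀ pΓx).mp h3
  have hDfin : D * Real.Gamma z ≤ Real.Gamma (z + β) := by
    have hDz : (D * Real.Gamma z) ^ n ≤ Real.Gamma (z + β) ^ n := by
      have : D ^ n * Real.Gamma z ^ n ≤ x * Real.Gamma z ^ n :=
        mul_le_mul_of_nonneg_right hxC (by positivity)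
      calc (D * Real.Gamma z) ^ n = D ^ n * Real.Gamma z ^ n := mul_pow _ _ _
      _ ≤ x * Real.Gamma z ^ n := this
      _ ≤ Real.Gamma (z + β) ^ n := step
    exact le_of_pow_le_pow_left₀ hn0 pΓzb.le hDz
  calc C * Real.Gamma z ≤ D * Real.Gamma z := by
        have : C ≤ D := le_max_left _ _
        nlinarith
  _ ≤ Real.Gamma (z + β) := hDfin

lemma summable_aux {β : ℝ} (hβ : 0 < β) {A : ℝ} (hA : 0 ≤ A) :
    Summable (fun k : ℕ => A ^ k * (β * k + 1) / Real.Gamma (β * k + 1)) := by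
  apply summable_of_ratio_norm_eventually_le (r := 1/2) (by norm_num)
  have htend : Tendsto (fun k : ℕ => β * k + 1) atTop atTop := by
    apply tendsto_atTop_add_const_right
    exact (tendsto_natCast_atTop_atTop (R := ℝ)).const_mul_atTop hβ
  filter_upwards [htend.eventually (gamma_growth hβ (2 * (A + 1) * (β + 1)))] with k hk
  have hG1 : 0 < Real.Gamma (β * k + 1) := Real.Gamma_pos_of_pos (by positivity)
  have hG2 : 0 < Real.Gamma (β * (k + 1 : ℕ) + 1) := Real.Gamma_pos_of_pos (by positivity)
  have hcast : (((k : ℕ) + 1 : ℕ) : ℝ) = (k : ℝ) + 1 := by push_cast; ring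
  have hG2' : Real.Gamma (β * (k + 1 : ℕ) + 1) = Real.Gamma ((β * k + 1) + β) := by
    rw [hcast]; ring_nf
  have hkey : 2 * (A + 1) * (β + 1) * Real.Gamma (β * k + 1)
      ≤ Real.Gamma (β * (k + 1 : ℕ) + 1) := by rw [hG2']; exact hk
  rw [Real.norm_eq_abs, Real.norm_eq_abs,
    abs_of_nonneg (by positivity), abs_of_nonneg (by positivity)]
  rw [hcast] at hkey hG2
  simp only [hcast]
  rw [← mul_div_assoc, div_le_div_iff₀ hG2 hG1, pow_succ]
  have hk0 : (0:ℝ) ≤ (k:ℝ) := Nat.cast_nonneg k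
  have hd : A * (β * ((k:ℝ) + 1) + 1) * 2 ≤ (β * k + 1) * (2 * (A + 1) * (β + 1)) := by
    nlinarith [mul_nonneg (mul_nonneg hA (mul_nonneg hβ.le hβ.le)) hk0,
      mul_nonneg (mul_nonneg hβ.le hβ.le) hk0, mul_nonneg hβ.le hk0, mul_nonneg hA hβ.le,
      mul_nonneg (mul_nonneg hA hβ.le) hk0]
  have h2 : A * (β * ((k:ℝ) + 1) + 1) * Gamma (β * k + 1) * 2 ≤ (β * k + 1) * Gamma (β * ((k:ℝ) + 1) + 1) := by
    calc A * (β * ((k:ℝ) + 1) + 1) * Gamma (β * k + 1) * 2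
        = (A * (β * ((k:ℝ) + 1) + 1) * 2) * Gamma (β * k + 1) := by ring
    _ ≤ ((β * k + 1) * (2 * (A + 1) * (β + 1))) * Gamma (β * k + 1) :=
        mul_le_mul_of_nonneg_right hd hG1.le
    _ = (β * k + 1) * (2 * (A + 1) * (β + 1) * Gamma (β * k + 1)) := by ring
    _ ≤ (β * k + 1) * Gamma (β * ((k:ℝ) + 1) + 1) :=
        mul_le_mul_of_nonneg_left hkey (by positivity)
  have hAk : (0:ℝ) ≤ A ^ k := pow_nonneg hA k
  nlinarith [mul_le_mul_of_nonneg_left h2 hAk]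

/-- For `β > 0`, `μ ≥ 0` and `t > 0`, the function `t ↦ E_β(-μ t^β)` is
differentiable at `t` with derivative `-μ t^{β-1} E_{β,β}(-μ t^β)`. -/
theorem mittagLeffler_hasDerivAt (β μ : ℝ) (hβ : 0 < β) (hμ : 0 ≤ μ) (t : ℝ) (ht : 0 < t) :
    HasDerivAt (fun t : ℝ => ∑' k : ℕ, (-μ) ^ k * t ^ (β * k) / Real.Gamma (β * k + 1))
      (-μ * t ^ (β - 1) * ∑' k : ℕ, (-μ * t ^ β) ^ k / Real.Gamma (β * k + β)) t := by
  set s : Set ℝ := Set.Ioo (t/2) (t+1) with hs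
  have hts : t ∈ s := ⟨by linarith, by linarith⟩
  set u : ℕ → ℝ := fun k => (2/t) * ((μ * (t+1)^β)^k * (β * k + 1) / Real.Gamma (β * k + 1))
    with hu_def
  have hu : Summable u := (summable_aux hβ (by positivity)).mul_left _
  set g' : ℕ → ℝ → ℝ := fun n y => (-μ)^n * (β * n * y ^ (β * n - 1)) / Real.Gamma (β * n + 1)
    with hg'_def
  have hypos : ∀ y : ℝ, y ∈ s → 0 < y := fun y hy => lt_trans (by linarith) hy.1
  have hg : ∀ (n : ℕ) (y : ℝ), y ∈ s →
      HasDerivAt (fun z : ℝ => (-μ)^n * z ^ (β * n) / Real.Gamma (β * n + 1)) (g' n y) y := by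
    intro n y hy
    exact ((Real.hasDerivAt_rpow_const (Or.inl (hypos y hy).ne')).const_mul ((-μ)^n)).div_const _
  have hg'bound : ∀ (n : ℕ) (y : ℝ), y ∈ s → ‖g' n y‖ ≤ u n := by
    intro n y hy
    have hy0 : 0 < y := hypos y hy
    have hΓ : 0 < Real.Gamma (β * n + 1) := Real.Gamma_pos_of_pos (by positivity)
    have habs : ‖g' n y‖ = μ^n * (β * n * y ^ (β * n - 1)) / Real.Gamma (β * n + 1) := by
      rw [hg'_def, Real.norm_eq_abs, abs_div, abs_of_pos hΓ, abs_mul, abs_pow, abs_neg,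
        abs_of_nonneg hμ, abs_of_nonneg (by positivity)]
    rw [habs, hu_def]
    have hrw : y ^ (β * n - 1) = y ^ (β * n) / y := by
      rw [Real.rpow_sub hy0, Real.rpow_one]
    have h1 : y ^ (β * (n:ℝ)) ≤ (t+1) ^ (β * (n:ℝ)) :=
      Real.rpow_le_rpow hy0.le hy.2.le (by positivity)
    have h2 : y ^ (β * (n:ℝ)) / y ≤ (t+1) ^ (β * (n:ℝ)) * (2/t) := by
      have hy1 : 1/y ≤ 2/t := by
        rw [div_le_div_iff₀ hy0 ht]
        nlinarith [hy.1]
      calc y ^ (β * (n:ℝ)) / y = y ^ (β * (n:ℝ)) * (1/y) := by ring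
      _ ≤ (t+1) ^ (β * (n:ℝ)) * (2/t) := by
          apply mul_le_mul h1 hy1 (by positivity) (by positivity)
    have h3 : μ^n * (t+1)^(β * (n:ℝ)) = (μ * (t+1)^β)^n := by
      rw [mul_pow, Real.rpow_mul (by positivity : (0:ℝ) ≤ t+1), Real.rpow_natCast]
    rw [hrw]
    calc μ^n * (β * n * (y ^ (β * (n:ℝ)) / y)) / Real.Gamma (β * n + 1)
        ≤ μ^n * ((β * n + 1) * ((t+1) ^ (β * (n:ℝ)) * (2/t))) / Real.Gamma (β * n + 1) := by
          gcongr
          linarith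
    _ = 2 / t * ((μ * (t + 1) ^ β) ^ n * (β * ↑n + 1) / Real.Gamma (β * ↑n + 1)) := by
          rw [← h3]; ring
  have hg0 : Summable (fun n : ℕ => (-μ)^n * t ^ (β * n) / Real.Gamma (β * n + 1)) := by
    apply Summable.of_norm_bounded (summable_aux hβ (show (0:ℝ) ≤ μ * t^β by positivity))
    intro n
    have hΓ : 0 < Real.Gamma (β * n + 1) := Real.Gamma_pos_of_pos (by positivity)
    have h3 : μ^n * t^(β * (n:ℝ)) = (μ * t^β)^n := by
      rw [mul_pow, Real.rpow_mul ht.le, Real.rpow_natCast]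
    rw [Real.norm_eq_abs, abs_div, abs_of_pos hΓ, abs_mul, abs_pow, abs_neg,
      abs_of_nonneg hμ, abs_of_nonneg (by positivity : (0:ℝ) ≤ t ^ (β * (n:ℝ)))]
    rw [h3]
    calc (μ * t^β)^n / Real.Gamma (β * n + 1)
        ≤ (μ * t^β)^n * (β * n + 1) / Real.Gamma (β * n + 1) := by
          gcongr
          nlinarith [pow_nonneg (show (0:ℝ) ≤ μ * t^β by positivity) n,
            mul_nonneg (pow_nonneg (show (0:ℝ) ≤ μ * t^β by positivity) n)
              (mul_nonneg hβ.le (Nat.cast_nonneg (α := ℝ) n))]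
    _ = (μ * t^β)^n * (β * n + 1) / Real.Gamma (β * n + 1) := rfl
  have main : HasDerivAt (fun z : ℝ => ∑' n : ℕ, (-μ)^n * z ^ (β * n) / Real.Gamma (β * n + 1))
      (∑' n, g' n t) t :=
    hasDerivAt_tsum_of_isPreconnected hu isOpen_Ioo (convex_Ioo _ _).isPreconnected
      hg hg'bound hts hg0 hts
  have hsum' : Summable (fun n => g' n t) :=
    Summable.of_norm_bounded hu (fun n => hg'bound n t hts)
  have hterm : ∀ k : ℕ, g' (k+1) t
      = (-μ * t ^ (β-1)) * ((-μ * t^β)^k / Real.Gamma (β * k + β)) := by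
    intro k
    have hc : ((k+1 : ℕ) : ℝ) = (k:ℝ) + 1 := by push_cast; ring
    have hβk : β * ((k:ℝ) + 1) ≠ 0 := by positivity
    have hΓpos : 0 < Real.Gamma (β * ((k:ℝ)+1)) := Real.Gamma_pos_of_pos (by positivity)
    have hΓ : Real.Gamma (β * ((k:ℝ)+1) + 1) = (β * ((k:ℝ)+1)) * Real.Gamma (β * ((k:ℝ)+1)) :=
      Real.Gamma_add_one hβk
    have he2 : β * ((k:ℝ)+1) = β * k + β := by ring
    have hpw : (-μ * t^β)^k = (-μ)^k * t^(β * (k:ℝ)) := by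
      rw [mul_pow, Real.rpow_mul ht.le, Real.rpow_natCast]
    have hexp : t ^ (β * ((k:ℝ)+1) - 1) = t ^ (β-1) * t ^ (β * (k:ℝ)) := by
      rw [← Real.rpow_add ht]; ring_nf
    rw [hg'_def]
    simp only [hc]
    rw [hΓ, hexp, hpw, ← he2]
    field_simp
    ring
  have heq : (∑' n, g' n t)
      = -μ * t ^ (β - 1) * ∑' k : ℕ, (-μ * t ^ β) ^ k / Real.Gamma (β * k + β) := by
    rw [Summable.tsum_eq_zero_add hsum']
    have h0 : g' 0 t = 0 := by simp [hg'_def]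
    rw [h0, zero_add]
    calc (∑' n : ℕ, g' (n+1) t)
        = ∑' k : ℕ, (-μ * t ^ (β-1)) * ((-μ * t^β)^k / Real.Gamma (β * k + β)) :=
          tsum_congr hterm
    _ = -μ * t ^ (β - 1) * ∑' k : ℕ, (-μ * t ^ β) ^ k / Real.Gamma (β * k + β) :=
          tsum_mul_left
  rw [← heq]
  exact main
end

section
/- Let 1 < β < 2 and μ ≥ 0, and define u(t) = E_β(−μ t^β) = ∑_{k=0}^∞ (−μ)^k t^{βk} / Γ(βk + 1) for t ≥ 0. Then u(0) = 1, u is twice differentiable on (0, ∞) with u′(t) → 0 as t → 0⁺, for every t > 0 the function s ↦ (t−s)^{1−β} u″(s) is integrable on (0,t), and the Dzhrbashyan–Caputo fractional derivative of order β of u satisfies (1/Γ(2−β)) ∫_0^t (t−s)^{1−β} u″(s) ds = −μ E_β(−μ t^β) for all t > 0. -/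
open MeasureTheory Set

namespace MLC

lemma nat_sq_le_pow (k : ℕ) : ((k : ℝ) + 1) ^ 2 ≤ 4 ^ k := by
  have h : (k : ℝ) + 1 ≤ 2 ^ k := by
    exact_mod_cast (Nat.lt_two_pow_self : k < 2 ^ k)
  calc ((k : ℝ) + 1) ^ 2 ≤ ((2 : ℝ) ^ k) ^ 2 :=
        pow_le_pow_left₀ (by positivity) h 2
    _ = 4 ^ k := by rw [← pow_mul, pow_mul']; norm_num

lemma gamma_ge_factorial {β : ℝ} (hβ : 1 < β) (k : ℕ) :
    (k.factorial : ℝ) ≤ Real.Gamma (β * k + 1) := by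
  rcases Nat.eq_zero_or_pos k with hk | hk
  · subst hk; simp [Real.Gamma_one]
  · have hk1 : (1 : ℝ) ≤ (k : ℝ) := by exact_mod_cast hk
    have h1 : ((k : ℝ) + 1) ≤ β * k + 1 := by nlinarith
    have h2 : (2 : ℝ) ≤ (k : ℝ) + 1 := by linarith
    have hmono := Real.Gamma_strictMonoOn_Ici.monotoneOn
      (mem_Ici.mpr h2) (mem_Ici.mpr (le_trans h2 h1)) h1
    calc (k.factorial : ℝ) = Real.Gamma ((k : ℝ) + 1) :=
          (Real.Gamma_nat_eq_factorial k).symm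
      _ ≤ Real.Gamma (β * k + 1) := hmono

lemma gamma_pos {β : ℝ} (hβ : 1 < β) (k : ℕ) : 0 < Real.Gamma (β * k + 1) :=
  Real.Gamma_pos_of_pos (by positivity)

lemma summable_div_gamma {β : ℝ} (hβ1 : 1 < β) (hβ2 : β < 2) {x : ℝ} (hx : 0 ≤ x)
    {c : ℕ → ℝ} (hc0 : ∀ k, 0 ≤ c k) (hc : ∀ k, c k ≤ x ^ k * (β * k + 2) ^ 2) :
    Summable fun k : ℕ => c k / Real.Gamma (β * k + 1) := by
  refine Summable.of_nonneg_of_le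
    (fun k => div_nonneg (hc0 k) (gamma_pos hβ1 k).le) (fun k => ?_)
    ((Real.summable_pow_div_factorial (4 * x)).mul_left 4)
  have hΓpos := gamma_pos hβ1 k
  have hfac := gamma_ge_factorial hβ1 k
  have hfacpos : (0 : ℝ) < k.factorial := by exact_mod_cast k.factorial_pos
  have hk0 : (0 : ℝ) ≤ (k : ℝ) := k.cast_nonneg
  have hnum : c k ≤ 4 * (4 * x) ^ k := by
    have h1 : (β * (k : ℝ) + 2) ^ 2 ≤ 4 * ((k : ℝ) + 1) ^ 2 := by
      have hb2 : β * (k : ℝ) ≤ 2 * k := by nlinarith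
      have hb0 : 0 ≤ β * (k : ℝ) := by nlinarith
      nlinarith [mul_le_mul hb2 hb2 hb0 (by positivity : (0:ℝ) ≤ 2 * k)]
    have h2 := nat_sq_le_pow k
    have hxk : (0 : ℝ) ≤ x ^ k := pow_nonneg hx k
    calc c k ≤ x ^ k * (β * k + 2) ^ 2 := hc k
      _ ≤ x ^ k * (4 * (4 : ℝ) ^ k) := by nlinarith
      _ = 4 * (4 * x) ^ k := by rw [mul_pow]; ring
  calc c k / Real.Gamma (β * k + 1) ≤ (4 * (4 * x) ^ k) / (k.factorial : ℝ) :=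
        div_le_div₀ (by positivity) hnum hfacpos hfac
    _ = 4 * ((4 * x) ^ k / k.factorial) := by ring

lemma real_beta {a b t : ℝ} (ha : 0 < a) (hb : 0 < b) (ht : 0 < t) :
    ∫ s in Ioo (0 : ℝ) t, s ^ (a - 1) * (t - s) ^ (b - 1) =
      Real.Gamma a * Real.Gamma b / Real.Gamma (a + b) * t ^ (a + b - 1) := by
  have h1 := Complex.betaIntegral_scaled (a : ℂ) (b : ℂ) ht
  have hΓab : Real.Gamma (a + b) ≠ 0 := (Real.Gamma_pos_of_pos (by linarith)).ne'
  have hcast : ((a : ℂ) + (b : ℂ)) = ((a + b : ℝ) : ℂ) := by push_cast; ring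
  have hΓabC : Complex.Gamma ((a : ℂ) + (b : ℂ)) ≠ 0 := by
    rw [hcast, Complex.Gamma_ofReal]
    exact_mod_cast hΓab
  have h2 := Complex.Gamma_mul_Gamma_eq_betaIntegral
    (s := (a : ℂ)) (t := (b : ℂ)) (by simpa using ha) (by simpa using hb)
  have hbeta : Complex.betaIntegral (a : ℂ) (b : ℂ) =
      ((Real.Gamma a * Real.Gamma b / Real.Gamma (a + b) : ℝ) : ℂ) := by
    have h3 : Complex.betaIntegral (a : ℂ) (b : ℂ) =
        Complex.Gamma a * Complex.Gamma b / Complex.Gamma ((a : ℂ) + (b : ℂ)) := by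
      rw [eq_div_iff hΓabC]; linear_combination -h2
    rw [h3, hcast, Complex.Gamma_ofReal, Complex.Gamma_ofReal, Complex.Gamma_ofReal]
    push_cast; ring
  have h3 : (∫ s in (0 : ℝ)..t, (s : ℂ) ^ ((a : ℂ) - 1) * ((t : ℂ) - s) ^ ((b : ℂ) - 1)) =
      ((∫ s in (0 : ℝ)..t, s ^ (a - 1) * (t - s) ^ (b - 1) : ℝ) : ℂ) := by
    rw [← intervalIntegral.integral_ofReal]
    apply intervalIntegral.integral_congr
    intro x hx
    rw [uIcc_of_le ht.le] at hx
    have hx2 : (0 : ℝ) ≤ t - x := by linarith [hx.2]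
    have e1 : ((a : ℂ) - 1) = ((a - 1 : ℝ) : ℂ) := by push_cast; ring
    have e2 : ((b : ℂ) - 1) = ((b - 1 : ℝ) : ℂ) := by push_cast; ring
    have e3 : ((t : ℂ) - (x : ℂ)) = ((t - x : ℝ) : ℂ) := by push_cast; ring
    simp only [e1, e2, e3, ← Complex.ofReal_cpow hx.1 (a - 1),
      ← Complex.ofReal_cpow hx2 (b - 1), ← Complex.ofReal_mul]
  have h4 : (t : ℂ) ^ ((a : ℂ) + (b : ℂ) - 1) = ((t ^ (a + b - 1) : ℝ) : ℂ) := by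
    have he : ((a : ℂ) + (b : ℂ) - 1) = ((a + b - 1 : ℝ) : ℂ) := by push_cast; ring
    rw [he, Complex.ofReal_cpow ht.le]
  rw [h3, h4, hbeta, ← Complex.ofReal_mul] at h1
  have h5 := Complex.ofReal_inj.mp h1
  rw [intervalIntegral.integral_of_le ht.le, integral_Ioc_eq_integral_Ioo] at h5
  rw [h5]; ring

lemma beta_integrable {a b t : ℝ} (ha : -1 < a) (hb : -1 < b) (ht : 0 < t) :
    IntegrableOn (fun s : ℝ => s ^ a * (t - s) ^ b) (Ioo 0 t) := by
  have h2 : (0 : ℝ) < t / 2 := by linarith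
  have p1 : IntegrableOn (fun s : ℝ => s ^ a * (t - s) ^ b) (Ioc 0 (t / 2)) := by
    have hi : IntervalIntegrable (fun s : ℝ => s ^ a) volume 0 (t / 2) :=
      intervalIntegral.intervalIntegrable_rpow' ha
    have hc : ContinuousOn (fun s : ℝ => (t - s) ^ b) (uIcc 0 (t / 2)) := by
      rw [uIcc_of_le h2.le]
      refine ContinuousOn.rpow_const ((continuous_const.sub continuous_id).continuousOn) ?_
      intro x hx
      exact Or.inl (ne_of_gt (by nlinarith [hx.2] : (0:ℝ) < t - x))
    have h := hi.mul_continuousOn hc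
    rwa [intervalIntegrable_iff_integrableOn_Ioc_of_le h2.le] at h
  have p2 : IntegrableOn (fun s : ℝ => s ^ a * (t - s) ^ b) (Ioc (t / 2) t) := by
    have hi : IntervalIntegrable (fun s : ℝ => (t - s) ^ b) volume (t / 2) t := by
      have h0 : IntervalIntegrable (fun s : ℝ => s ^ b) volume 0 (t / 2) :=
        intervalIntegral.intervalIntegrable_rpow' hb
      have h1 := (h0.comp_sub_left t).symm
      rw [sub_zero, show t - t / 2 = t / 2 by ring] at h1
      exact h1
    have hc : ContinuousOn (fun s : ℝ => s ^ a) (uIcc (t / 2) t) := by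
      rw [uIcc_of_le (by linarith)]
      refine ContinuousOn.rpow_const continuousOn_id ?_
      intro x hx
      exact Or.inl (ne_of_gt (by nlinarith [hx.1] : (0:ℝ) < x))
    have h := hi.mul_continuousOn hc
    rw [intervalIntegrable_iff_integrableOn_Ioc_of_le (by linarith)] at h
    exact h.congr_fun (fun x _ => mul_comm _ _) measurableSet_Ioc
  have hsub : Ioo (0 : ℝ) t ⊆ Ioc 0 (t / 2) ∪ Ioc (t / 2) t := by
    intro x hx
    rcases le_or_gt x (t / 2) with h | h
    · exact Or.inl ⟨hx.1, h⟩
    · exact Or.inr ⟨h, hx.2.le⟩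
  exact (p1.union p2).mono_set hsub


noncomputable def mlF (β μ : ℝ) (k : ℕ) (t : ℝ) : ℝ :=
  (-μ) ^ k * t ^ (β * k) / Real.Gamma (β * k + 1)

noncomputable def mlG (β μ : ℝ) (k : ℕ) (t : ℝ) : ℝ :=
  (-μ) ^ k * (β * k * t ^ (β * k - 1)) / Real.Gamma (β * k + 1)

noncomputable def mlH (β μ : ℝ) (k : ℕ) (t : ℝ) : ℝ :=
  (-μ) ^ k * (β * k * ((β * k - 1) * t ^ (β * k - 2))) / Real.Gamma (β * k + 1)

lemma mlG_zero (β μ : ℝ) (t : ℝ) : mlG β μ 0 t = 0 := by simp [mlG]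
lemma mlH_zero (β μ : ℝ) (t : ℝ) : mlH β μ 0 t = 0 := by simp [mlH]

lemma rpow_eq_pow {M β : ℝ} (hM : 0 ≤ M) (k : ℕ) : M ^ (β * k) = (M ^ β) ^ k := by
  rw [← Real.rpow_natCast (M ^ β) k, ← Real.rpow_mul hM]

lemma mlF_bound {β μ : ℝ} (hβ1 : 1 < β) (hμ : 0 ≤ μ) {M y : ℝ}
    (hM1 : 1 ≤ M) (hy0 : 0 < y) (hyM : y ≤ M) (k : ℕ) :
    ‖mlF β μ k y‖ ≤ (μ * M ^ β) ^ k * (β * k + 2) ^ 2 / Real.Gamma (β * k + 1) := by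
  have hΓ := gamma_pos hβ1 k
  have hM0 : (0 : ℝ) < M := by linarith
  have hk0 : (0 : ℝ) ≤ (k : ℝ) := k.cast_nonneg
  have he : 0 ≤ β * (k : ℝ) := by nlinarith
  have hy_nn : 0 ≤ y ^ (β * (k : ℝ)) := Real.rpow_nonneg hy0.le _
  have hnorm : ‖mlF β μ k y‖ = μ ^ k * y ^ (β * (k : ℝ)) / Real.Gamma (β * k + 1) := by
    rw [Real.norm_eq_abs, mlF, abs_div, abs_of_pos hΓ, abs_mul, abs_pow, abs_neg,
      abs_of_nonneg hμ, abs_of_nonneg hy_nn]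
  rw [hnorm, div_le_div_iff_of_pos_right hΓ]
  have hrp : y ^ (β * (k : ℝ)) ≤ (M ^ β) ^ k := by
    calc y ^ (β * (k : ℝ)) ≤ M ^ (β * (k : ℝ)) := Real.rpow_le_rpow hy0.le hyM he
      _ = (M ^ β) ^ k := rpow_eq_pow hM0.le k
  calc μ ^ k * y ^ (β * (k : ℝ)) ≤ μ ^ k * (M ^ β) ^ k :=
        mul_le_mul_of_nonneg_left hrp (pow_nonneg hμ k)
    _ = (μ * M ^ β) ^ k * 1 := by rw [mul_pow]; ring
    _ ≤ (μ * M ^ β) ^ k * (β * k + 2) ^ 2 := by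
        have h1 : (1 : ℝ) ≤ (β * k + 2) ^ 2 := by nlinarith
        have h2 : (0:ℝ) ≤ (μ * M ^ β) ^ k := by positivity
        nlinarith

lemma mlG_bound {β μ : ℝ} (hβ1 : 1 < β) (hμ : 0 ≤ μ) {M y : ℝ}
    (hM1 : 1 ≤ M) (hy0 : 0 < y) (hyM : y ≤ M) (k : ℕ) :
    ‖mlG β μ k y‖ ≤ (μ * M ^ β) ^ k * (β * k + 2) ^ 2 / Real.Gamma (β * k + 1) := by
  have hΓ := gamma_pos hβ1 k
  have hM0 : (0 : ℝ) < M := by linarith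
  rcases Nat.eq_zero_or_pos k with hk | hk
  · subst hk
    rw [mlG_zero, norm_zero]
    positivity
  · have hk1 : (1 : ℝ) ≤ (k : ℝ) := by exact_mod_cast hk
    have he : 0 ≤ β * (k : ℝ) - 1 := by nlinarith
    have hy_nn : 0 ≤ y ^ (β * (k : ℝ) - 1) := Real.rpow_nonneg hy0.le _
    have hb0 : (0 : ℝ) ≤ β * k := by nlinarith
    have hnorm : ‖mlG β μ k y‖ =
        μ ^ k * (β * k * y ^ (β * (k : ℝ) - 1)) / Real.Gamma (β * k + 1) := by
      rw [Real.norm_eq_abs, mlG, abs_div, abs_of_pos hΓ, abs_mul, abs_pow, abs_neg,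
        abs_of_nonneg hμ, abs_of_nonneg (mul_nonneg hb0 hy_nn)]
    rw [hnorm, div_le_div_iff_of_pos_right hΓ]
    have hrp : y ^ (β * (k : ℝ) - 1) ≤ (M ^ β) ^ k := by
      calc y ^ (β * (k : ℝ) - 1) ≤ M ^ (β * (k : ℝ) - 1) := Real.rpow_le_rpow hy0.le hyM he
        _ ≤ M ^ (β * (k : ℝ)) := Real.rpow_le_rpow_of_exponent_le hM1 (by linarith)
        _ = (M ^ β) ^ k := rpow_eq_pow hM0.le k
    have hsq : β * (k : ℝ) ≤ (β * k + 2) ^ 2 := by nlinarith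
    calc μ ^ k * (β * k * y ^ (β * (k : ℝ) - 1)) ≤ μ ^ k * (β * k * (M ^ β) ^ k) := by
          have := mul_le_mul_of_nonneg_left hrp hb0
          exact mul_le_mul_of_nonneg_left this (pow_nonneg hμ k)
      _ = β * k * (μ * M ^ β) ^ k := by rw [mul_pow]; ring
      _ ≤ (β * k + 2) ^ 2 * (μ * M ^ β) ^ k :=
          mul_le_mul_of_nonneg_right hsq (by positivity)
      _ = (μ * M ^ β) ^ k * (β * k + 2) ^ 2 := mul_comm _ _

lemma mlH_bound2 {β μ : ℝ} (hβ1 : 1 < β) (hβ2 : β < 2) (hμ : 0 ≤ μ) {M s : ℝ}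
    (hM1 : 1 ≤ M) (hs : 0 < s) (hsM : s ≤ M) (k : ℕ) :
    ‖mlH β μ k s‖ ≤
      s ^ (β - 2) * ((μ * M ^ β) ^ k * (β * k + 2) ^ 2 / Real.Gamma (β * k + 1)) := by
  have hΓ := gamma_pos hβ1 k
  have hM0 : (0 : ℝ) < M := by linarith
  rcases Nat.eq_zero_or_pos k with hk | hk
  · subst hk
    rw [mlH_zero, norm_zero]
    have h1 : (0:ℝ) ≤ s ^ (β - 2) := Real.rpow_nonneg hs.le _
    have h2 : (0:ℝ) ≤ (μ * M ^ β) ^ 0 * (β * 0 + 2) ^ 2 / Real.Gamma (β * 0 + 1) := by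
      positivity
    push_cast
    nlinarith
  · have hk1 : (1 : ℝ) ≤ (k : ℝ) := by exact_mod_cast hk
    have hb0 : (0 : ℝ) ≤ β * k := by nlinarith
    have hb1 : (0 : ℝ) ≤ β * k - 1 := by nlinarith
    have hsplit : s ^ (β * (k : ℝ) - 2) = s ^ (β - 2) * s ^ (β * k - β) := by
      rw [← Real.rpow_add hs]
      congr 1
      ring
    have hrp : s ^ (β * (k : ℝ) - β) ≤ (M ^ β) ^ k := by
      calc s ^ (β * (k : ℝ) - β) ≤ M ^ (β * (k : ℝ) - β) :=
            Real.rpow_le_rpow hs.le hsM (by nlinarith)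
        _ ≤ M ^ (β * (k : ℝ)) := Real.rpow_le_rpow_of_exponent_le hM1 (by linarith)
        _ = (M ^ β) ^ k := rpow_eq_pow hM0.le k
    have hs2 : 0 ≤ s ^ (β - 2) := Real.rpow_nonneg hs.le _
    have hs3 : 0 ≤ s ^ (β * (k : ℝ) - β) := Real.rpow_nonneg hs.le _
    have hs4 : 0 ≤ s ^ (β * (k : ℝ) - 2) := Real.rpow_nonneg hs.le _
    have hnorm : ‖mlH β μ k s‖ =
        μ ^ k * (β * k * ((β * k - 1) * s ^ (β * (k : ℝ) - 2))) / Real.Gamma (β * k + 1) := by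
      rw [Real.norm_eq_abs, mlH, abs_div, abs_of_pos hΓ, abs_mul, abs_pow, abs_neg,
        abs_of_nonneg hμ, abs_of_nonneg (mul_nonneg hb0 (mul_nonneg hb1 hs4))]
    rw [hnorm, mul_div_assoc', div_le_div_iff_of_pos_right hΓ]
    have hsq : β * (k : ℝ) * (β * k - 1) ≤ (β * k + 2) ^ 2 := by nlinarith
    have hx0 : (0:ℝ) ≤ (μ * M ^ β) ^ k := by positivity
    calc μ ^ k * (β * k * ((β * k - 1) * s ^ (β * (k : ℝ) - 2)))
        = s ^ (β - 2) * (β * k * (β * k - 1) * (μ ^ k * s ^ (β * (k : ℝ) - β))) := by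
          rw [hsplit]; ring
      _ ≤ s ^ (β - 2) * (β * k * (β * k - 1) * (μ ^ k * (M ^ β) ^ k)) := by
          have h1 : μ ^ k * s ^ (β * (k : ℝ) - β) ≤ μ ^ k * (M ^ β) ^ k :=
            mul_le_mul_of_nonneg_left hrp (pow_nonneg hμ k)
          have h2 := mul_le_mul_of_nonneg_left h1 (mul_nonneg hb0 hb1)
          exact mul_le_mul_of_nonneg_left h2 hs2
      _ = s ^ (β - 2) * (β * k * (β * k - 1) * (μ * M ^ β) ^ k) := by rw [mul_pow]
      _ ≤ s ^ (β - 2) * ((β * k + 2) ^ 2 * (μ * M ^ β) ^ k) := by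
          have := mul_le_mul_of_nonneg_right hsq hx0
          exact mul_le_mul_of_nonneg_left this hs2
      _ = s ^ (β - 2) * ((μ * M ^ β) ^ k * (β * k + 2) ^ 2) := by ring


lemma hasDerivAt_mlF (β μ : ℝ) (k : ℕ) {t : ℝ} (ht : t ≠ 0) :
    HasDerivAt (mlF β μ k) (mlG β μ k t) t := by
  have h := ((Real.hasDerivAt_rpow_const (x := t) (p := β * k) (Or.inl ht)).const_mul
    ((-μ) ^ k)).div_const (Real.Gamma (β * k + 1))
  exact h

lemma hasDerivAt_mlG (β μ : ℝ) (k : ℕ) {t : ℝ} (ht : t ≠ 0) :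
    HasDerivAt (mlG β μ k) (mlH β μ k t) t := by
  have hfun : mlG β μ k = fun x : ℝ =>
      (-μ) ^ k * (β * k) / Real.Gamma (β * k + 1) * x ^ (β * k - 1) := by
    funext x; unfold mlG; ring
  have h := (Real.hasDerivAt_rpow_const (x := t) (p := β * k - 1) (Or.inl ht)).const_mul
    ((-μ) ^ k * (β * k) / Real.Gamma (β * k + 1))
  rw [hfun]
  refine h.congr_deriv ?_
  rw [show β * (k : ℝ) - 1 - 1 = β * k - 2 by ring]
  unfold mlH; ring


lemma summable_bound {β : ℝ} (hβ1 : 1 < β) (hβ2 : β < 2) {μ M : ℝ}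
    (hμ : 0 ≤ μ) (hM0 : 0 ≤ M) :
    Summable fun k : ℕ => (μ * M ^ β) ^ k * (β * k + 2) ^ 2 / Real.Gamma (β * k + 1) := by
  have hx : 0 ≤ μ * M ^ β := mul_nonneg hμ (Real.rpow_nonneg hM0 β)
  exact summable_div_gamma hβ1 hβ2 hx
    (fun k => mul_nonneg (pow_nonneg hx k) (sq_nonneg _)) (fun k => le_rfl)

lemma summable_mlF {β μ : ℝ} (hβ1 : 1 < β) (hβ2 : β < 2) (hμ : 0 ≤ μ) {t : ℝ}
    (ht : 0 < t) : Summable fun k => mlF β μ k t :=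
  Summable.of_norm_bounded (summable_bound hβ1 hβ2 hμ (by linarith : (0:ℝ) ≤ t + 1))
    (fun k => mlF_bound hβ1 hμ (by linarith) ht (by linarith) k)

lemma summable_mlG {β μ : ℝ} (hβ1 : 1 < β) (hβ2 : β < 2) (hμ : 0 ≤ μ) {t : ℝ}
    (ht : 0 < t) : Summable fun k => mlG β μ k t :=
  Summable.of_norm_bounded (summable_bound hβ1 hβ2 hμ (by linarith : (0:ℝ) ≤ t + 1))
    (fun k => mlG_bound hβ1 hμ (by linarith) ht (by linarith) k)

lemma hasDerivAt_sumF {β μ : ℝ} (hβ1 : 1 < β) (hβ2 : β < 2) (hμ : 0 ≤ μ) {t : ℝ}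
    (ht : 0 < t) :
    HasDerivAt (fun z => ∑' k, mlF β μ k z) (∑' k, mlG β μ k t) t := by
  refine hasDerivAt_tsum_of_isPreconnected
    (summable_bound hβ1 hβ2 hμ (by linarith : (0:ℝ) ≤ t + 1))
    (isOpen_Ioo (a := (0:ℝ)) (b := t + 1)) isPreconnected_Ioo
    (fun k y hy => hasDerivAt_mlF β μ k (ne_of_gt hy.1))
    (fun k y hy => mlG_bound hβ1 hμ (by linarith) hy.1 hy.2.le k)
    (⟨ht, by linarith⟩ : t ∈ Ioo (0:ℝ) (t+1))
    (summable_mlF hβ1 hβ2 hμ ht)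
    (⟨ht, by linarith⟩ : t ∈ Ioo (0:ℝ) (t+1))

lemma hasDerivAt_sumG {β μ : ℝ} (hβ1 : 1 < β) (hβ2 : β < 2) (hμ : 0 ≤ μ) {t : ℝ}
    (ht : 0 < t) :
    HasDerivAt (fun z => ∑' k, mlG β μ k z) (∑' k, mlH β μ k t) t := by
  set ε := min t 1 / 2 with hε_def
  have hεpos : 0 < ε := by
    have : 0 < min t 1 := lt_min ht one_pos
    positivity
  have hε1 : ε ≤ 1 := by
    have := min_le_right t 1
    rw [hε_def]; linarith
  have hεt : ε < t := by
    calc ε < min t 1 := half_lt_self (lt_min ht one_pos)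
      _ ≤ t := min_le_left _ _
  refine hasDerivAt_tsum_of_isPreconnected
    ((summable_bound hβ1 hβ2 hμ (by linarith : (0:ℝ) ≤ t + 1)).mul_left (ε ^ (β - 2)))
    (isOpen_Ioo (a := ε) (b := t + 1)) isPreconnected_Ioo
    (fun k y hy => hasDerivAt_mlG β μ k (ne_of_gt (hεpos.trans hy.1)))
    (fun k y hy => ?_)
    (⟨hεt, by linarith⟩ : t ∈ Ioo ε (t+1))
    (summable_mlG hβ1 hβ2 hμ ht)
    (⟨hεt, by linarith⟩ : t ∈ Ioo ε (t+1))
  have hy0 : 0 < y := hεpos.trans hy.1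
  calc ‖mlH β μ k y‖
      ≤ y ^ (β - 2) * ((μ * (t+1) ^ β) ^ k * (β * k + 2) ^ 2 / Real.Gamma (β * k + 1)) :=
        mlH_bound2 hβ1 hβ2 hμ (by linarith) hy0 hy.2.le k
    _ ≤ ε ^ (β - 2) * ((μ * (t+1) ^ β) ^ k * (β * k + 2) ^ 2 / Real.Gamma (β * k + 1)) := by
        have h1 : y ^ (β - 2) ≤ ε ^ (β - 2) :=
          Real.rpow_le_rpow_of_nonpos hεpos hy.1.le (by linarith)
        have h2 : (0:ℝ) ≤ (μ * (t+1) ^ β) ^ k * (β * k + 2) ^ 2 / Real.Gamma (β * k + 1) := by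
          have hx : 0 ≤ μ * (t+1) ^ β := mul_nonneg hμ (Real.rpow_nonneg (by linarith) β)
          exact div_nonneg (mul_nonneg (pow_nonneg hx k) (sq_nonneg _)) (gamma_pos hβ1 k).le
        exact mul_le_mul_of_nonneg_right h1 h2

lemma deriv_sumF {β μ : ℝ} (hβ1 : 1 < β) (hβ2 : β < 2) (hμ : 0 ≤ μ) {u : ℝ → ℝ}
    (hu : u = fun z : ℝ => ∑' k : ℕ, (-μ) ^ k * z ^ (β * k) / Real.Gamma (β * k + 1))
    {t : ℝ} (ht : 0 < t) : deriv u t = ∑' k, mlG β μ k t := by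
  have h : u = fun z => ∑' k, mlF β μ k z := hu
  rw [h]
  exact (hasDerivAt_sumF hβ1 hβ2 hμ ht).deriv

lemma hasDerivAt_deriv_u {β μ : ℝ} (hβ1 : 1 < β) (hβ2 : β < 2) (hμ : 0 ≤ μ) {u : ℝ → ℝ}
    (hu : u = fun z : ℝ => ∑' k : ℕ, (-μ) ^ k * z ^ (β * k) / Real.Gamma (β * k + 1))
    {s : ℝ} (hs : 0 < s) : HasDerivAt (deriv u) (∑' k, mlH β μ k s) s := by
  have hev : deriv u =ᶠ[nhds s] (fun z => ∑' k, mlG β μ k z) := by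
    filter_upwards [Ioi_mem_nhds hs] with y hy
    exact deriv_sumF hβ1 hβ2 hμ hu hy
  exact (hasDerivAt_sumG hβ1 hβ2 hμ hs).congr_of_eventuallyEq hev

lemma deriv2_eq {β μ : ℝ} (hβ1 : 1 < β) (hβ2 : β < 2) (hμ : 0 ≤ μ) {u : ℝ → ℝ}
    (hu : u = fun z : ℝ => ∑' k : ℕ, (-μ) ^ k * z ^ (β * k) / Real.Gamma (β * k + 1))
    {s : ℝ} (hs : 0 < s) : deriv (deriv u) s = ∑' k, mlH β μ k s :=
  (hasDerivAt_deriv_u hβ1 hβ2 hμ hu hs).deriv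


lemma Gamma_rec {m : ℝ} (hm : 1 < m) :
    Real.Gamma (m + 1) = m * ((m - 1) * Real.Gamma (m - 1)) := by
  have h1 : m ≠ 0 := ne_of_gt (by linarith)
  have h2 : Real.Gamma m = (m - 1) * Real.Gamma (m - 1) := by
    have h3 := Real.Gamma_add_one (s := m - 1) (ne_of_gt (by linarith))
    rwa [sub_add_cancel] at h3
  rw [Real.Gamma_add_one h1, h2]

lemma beta_step {β t : ℝ} (hβ1 : 1 < β) (hβ2 : β < 2) (ht : 0 < t) {A : ℝ} (hA : β ≤ A) :
    ∫ s in Ioo (0:ℝ) t, s ^ (A - 2) * (t - s) ^ (1 - β)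
      = Real.Gamma (A - 1) * Real.Gamma (2 - β) / Real.Gamma (A + 1 - β) * t ^ (A - β) := by
  rw [show A - 2 = A - 1 - 1 by ring, show (1 - β) = 2 - β - 1 by ring,
    real_beta (by nlinarith) (by linarith) ht,
    show A - 1 + (2 - β) = A + 1 - β by ring, show A + 1 - β - 1 = A - β by ring]

lemma mlH_int_aux {β μ : ℝ} (hβ1 : 1 < β) (hβ2 : β < 2) (hμ : 0 ≤ μ) {t : ℝ}
    (ht : 0 < t) (j : ℕ) :
    IntegrableOn (fun s : ℝ => (t - s) ^ (1 - β) * mlH β μ (j+1) s) (Ioo 0 t) ∧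
    (∫ s in Ioo (0:ℝ) t, (t - s) ^ (1 - β) * mlH β μ (j+1) s)
      = (-μ) ^ (j+1) * Real.Gamma (2 - β) * t ^ (β * j) / Real.Gamma (β * j + 1) ∧
    (∫ s in Ioo (0:ℝ) t, ‖(t - s) ^ (1 - β) * mlH β μ (j+1) s‖)
      = μ ^ (j+1) * Real.Gamma (2 - β) * t ^ (β * j) / Real.Gamma (β * j + 1) := by
  have hj0 : (0:ℝ) ≤ (j:ℝ) := j.cast_nonneg
  set A : ℝ := β * ((j:ℝ) + 1) with hA_def
  have hA : β ≤ A := by rw [hA_def]; nlinarith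
  have hA1 : 1 < A := by linarith
  have hAcast : β * ((j+1 : ℕ) : ℝ) = A := by rw [hA_def]; push_cast; ring
  have hΓj := gamma_pos hβ1 j
  have hΓA1 : 0 < Real.Gamma (A - 1) := Real.Gamma_pos_of_pos (by linarith)
  have hΓ2β : 0 < Real.Gamma (2 - β) := Real.Gamma_pos_of_pos (by linarith)
  set C : ℝ := (-μ) ^ (j+1) * (A * (A - 1)) / Real.Gamma (A + 1) with hC_def
  have hfun : (fun s : ℝ => (t - s) ^ (1 - β) * mlH β μ (j+1) s)
      = fun s : ℝ => C * (s ^ (A - 2) * (t - s) ^ (1 - β)) := by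
    funext s
    rw [hC_def, mlH, hAcast]
    ring
  have hrec : Real.Gamma (A + 1) = A * ((A - 1) * Real.Gamma (A - 1)) := Gamma_rec hA1
  have hΓA1pos : 0 < Real.Gamma (A + 1) := by
    rw [hrec]
    exact mul_pos (by linarith) (mul_pos (by linarith) hΓA1)
  have hint : IntegrableOn (fun s : ℝ => (t - s) ^ (1 - β) * mlH β μ (j+1) s) (Ioo 0 t) := by
    rw [hfun]
    exact (beta_integrable (by nlinarith) (by linarith) ht).const_mul C
  have hbs := beta_step hβ1 hβ2 ht hA
  have hply : A + 1 - β = β * j + 1 := by rw [hA_def]; ring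
  have hplz : A - β = β * j := by rw [hA_def]; ring
  rw [hply, hplz] at hbs
  refine ⟨hint, ?_, ?_⟩
  · rw [hfun, integral_const_mul, hbs, hC_def, hrec]
    have hne1 : A ≠ 0 := ne_of_gt (by linarith)
    have hne2 : A - 1 ≠ 0 := ne_of_gt (by linarith)
    field_simp
  · have habs : ∀ s ∈ Ioo (0:ℝ) t,
        ‖(t - s) ^ (1 - β) * mlH β μ (j+1) s‖
          = (μ ^ (j+1) * (A * (A - 1)) / Real.Gamma (A + 1)) * (s ^ (A - 2) * (t - s) ^ (1 - β)) := by
      intro s hs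
      have h1 : (0:ℝ) ≤ s ^ (A - 2) := Real.rpow_nonneg hs.1.le _
      have h2 : (0:ℝ) ≤ (t - s) ^ (1 - β) := Real.rpow_nonneg (by linarith [hs.2]) _
      have h3 : (fun s : ℝ => (t - s) ^ (1 - β) * mlH β μ (j+1) s) s
          = C * (s ^ (A - 2) * (t - s) ^ (1 - β)) := by rw [hfun]
      simp only at h3
      rw [h3, Real.norm_eq_abs, abs_mul, abs_of_nonneg (mul_nonneg h1 h2), hC_def]
      have h4 : |(-μ) ^ (j+1) * (A * (A - 1)) / Real.Gamma (A + 1)|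
          = μ ^ (j+1) * (A * (A - 1)) / Real.Gamma (A + 1) := by
        rw [abs_div, abs_of_pos hΓA1pos, abs_mul, abs_pow, abs_neg, abs_of_nonneg hμ,
          abs_of_nonneg (by nlinarith : (0:ℝ) ≤ A * (A - 1))]
      rw [h4]
    rw [setIntegral_congr_fun measurableSet_Ioo habs, integral_const_mul, hbs, hrec]
    have hne1 : A ≠ 0 := ne_of_gt (by linarith)
    have hne2 : A - 1 ≠ 0 := ne_of_gt (by linarith)
    field_simp


end MLC

open MLC in
/-- For `1 < β < 2` and `μ ≥ 0`, the function `u(t) = E_β(-μ t^β)` satisfies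
`u(0) = 1`, is twice differentiable on `(0,∞)` with `u'(t) → 0` as `t → 0⁺`,
`(t-s)^{1-β} u''(s)` is integrable on `(0,t)` for each `t > 0`, and solves the
fractional wave type equation
`(1/Γ(2-β)) ∫₀ᵗ (t-s)^{1-β} u''(s) ds = -μ E_β(-μ t^β)` for `t > 0`. -/
theorem mittagLeffler_caputo_wave (β μ : ℝ) (hβ : 1 < β) (hβ' : β < 2) (hμ : 0 ≤ μ)
    (u : ℝ → ℝ)
    (hu : u = fun t : ℝ => ∑' k : ℕ, (-μ) ^ k * t ^ (β * k) / Real.Gamma (β * k + 1)) :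
    u 0 = 1 ∧
    (∀ t > (0 : ℝ), DifferentiableAt ℝ u t ∧ DifferentiableAt ℝ (deriv u) t) ∧
    Filter.Tendsto (deriv u) (nhdsWithin 0 (Ioi 0)) (nhds 0) ∧
    (∀ t > (0 : ℝ),
      IntegrableOn (fun s : ℝ => (t - s) ^ (1 - β) * deriv (deriv u) s) (Ioo 0 t)) ∧
    (∀ t > (0 : ℝ),
      (1 / Real.Gamma (2 - β)) * ∫ s in Ioo 0 t, (t - s) ^ (1 - β) * deriv (deriv u) s
        = -μ * ∑' k : ℕ, (-μ) ^ k * t ^ (β * k) / Real.Gamma (β * k + 1)) := by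
  have hΓ2β : 0 < Real.Gamma (2 - β) := Real.Gamma_pos_of_pos (by linarith)
  refine ⟨?_, ?_, ?_, ?_, ?_⟩
  -- u 0 = 1
  · rw [hu]
    have h : ∀ k : ℕ, k ≠ 0 → (-μ) ^ k * (0:ℝ) ^ (β * k) / Real.Gamma (β * k + 1) = 0 := by
      intro k hk
      have hk1 : (1:ℝ) ≤ (k:ℝ) := by exact_mod_cast Nat.one_le_iff_ne_zero.mpr hk
      have hk' : (0:ℝ) < β * k := by nlinarith
      rw [Real.zero_rpow (ne_of_gt hk')]
      simp
    show (∑' k : ℕ, (-μ) ^ k * (0:ℝ) ^ (β * k) / Real.Gamma (β * k + 1)) = 1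
    rw [tsum_eq_single 0 h]
    norm_num [Real.Gamma_one]
  -- differentiability
  · intro t ht
    constructor
    · have h : u = fun z => ∑' k, mlF β μ k z := hu
      rw [h]
      exact (hasDerivAt_sumF hβ hβ' hμ ht).differentiableAt
    · exact (hasDerivAt_deriv_u hβ hβ' hμ hu ht).differentiableAt
  -- tendsto of deriv at 0+
  · have hcong : (fun y => ∑' k, mlG β μ k y) =ᶠ[nhdsWithin 0 (Ioi 0)] deriv u := by
      filter_upwards [self_mem_nhdsWithin] with y hy
      exact (deriv_sumF hβ hβ' hμ hu hy).symm
    refine Filter.Tendsto.congr' hcong ?_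
    have h0 : (nhds (0:ℝ)) = nhds (∑' _ : ℕ, (0:ℝ)) := by rw [tsum_zero]
    rw [h0]
    apply tendsto_tsum_of_dominated_convergence
      (bound := fun k : ℕ => (μ * (1:ℝ) ^ β) ^ k * (β * k + 2) ^ 2 / Real.Gamma (β * k + 1))
    · exact summable_bound hβ hβ' hμ zero_le_one
    · intro k
      rcases Nat.eq_zero_or_pos k with hk | hk
      · subst hk
        simpa [mlG_zero] using (tendsto_const_nhds :
          Filter.Tendsto (fun _ : ℝ => (0:ℝ)) (nhdsWithin 0 (Ioi 0)) (nhds 0))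
      · have hk1 : (1:ℝ) ≤ (k:ℝ) := by exact_mod_cast hk
        have he : (0:ℝ) < β * k - 1 := by nlinarith
        have T0 : Filter.Tendsto (fun y : ℝ => y ^ (β * (k:ℝ) - 1))
            (nhdsWithin 0 (Ioi 0)) (nhds 0) := by
          have hc : ContinuousAt (fun y : ℝ => y ^ (β * (k:ℝ) - 1)) 0 :=
            Real.continuousAt_rpow_const 0 _ (Or.inr he.le)
          have h := hc.tendsto.mono_left
            (nhdsWithin_le_nhds : nhdsWithin (0:ℝ) (Ioi 0) ≤ nhds 0)
          rwa [Real.zero_rpow (ne_of_gt he)] at h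
        have T1 := ((T0.const_mul (β * (k:ℝ))).const_mul ((-μ) ^ k)).div_const
          (Real.Gamma (β * k + 1))
        simpa [mlG] using T1
    · filter_upwards [Ioo_mem_nhdsGT_of_mem
        (⟨le_rfl, zero_lt_one⟩ : (0:ℝ) ∈ Ico (0:ℝ) 1)] with y hy k
      exact mlG_bound hβ hμ le_rfl hy.1 hy.2.le k
  -- integrability
  · intro t ht
    set D : ℝ := ∑' k : ℕ, (μ * (t+1) ^ β) ^ k * (β * k + 2) ^ 2 / Real.Gamma (β * k + 1)
      with hD_def
    refine Integrable.mono' ((beta_integrable (a := β - 2) (b := 1 - β) (by linarith) (by linarith) ht).const_mul D)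
      ?_ ?_
    · have hm1 : AEStronglyMeasurable (fun s : ℝ => (t - s) ^ (1 - β))
          (volume.restrict (Ioo 0 t)) := by
        refine ContinuousOn.aestronglyMeasurable ?_ measurableSet_Ioo
        refine ContinuousOn.rpow_const ((continuous_const.sub continuous_id).continuousOn) ?_
        intro x hx
        exact Or.inl (ne_of_gt (by linarith [hx.2] : (0:ℝ) < t - x))
      exact hm1.mul (measurable_deriv _).aestronglyMeasurable
    · filter_upwards [ae_restrict_mem measurableSet_Ioo] with s hs
      have hs0 : 0 < s := hs.1
      have hst : s < t := hs.2
      have hts : (0:ℝ) ≤ (t - s) ^ (1 - β) := Real.rpow_nonneg (by linarith) _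
      have hbd : ∀ k, ‖mlH β μ k s‖
          ≤ s ^ (β - 2) * ((μ * (t+1) ^ β) ^ k * (β * k + 2) ^ 2 / Real.Gamma (β * k + 1)) :=
        fun k => mlH_bound2 hβ hβ' hμ (by linarith) hs0 (by linarith) k
      have hsum_d : Summable (fun k : ℕ =>
          s ^ (β - 2) * ((μ * (t+1) ^ β) ^ k * (β * k + 2) ^ 2 / Real.Gamma (β * k + 1))) :=
        (summable_bound hβ hβ' hμ (by linarith)).mul_left _
      have hsumn : Summable (fun k => ‖mlH β μ k s‖) :=
        Summable.of_nonneg_of_le (fun k => norm_nonneg _) hbd hsum_d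
      have h1 : ‖∑' k, mlH β μ k s‖ ≤ ∑' k, ‖mlH β μ k s‖ := norm_tsum_le_tsum_norm hsumn
      have h2 := Summable.tsum_le_tsum hbd hsumn hsum_d
      have h3 : (∑' k : ℕ, s ^ (β - 2) *
          ((μ * (t+1) ^ β) ^ k * (β * k + 2) ^ 2 / Real.Gamma (β * k + 1)))
          = s ^ (β - 2) * D := tsum_mul_left
      rw [norm_mul, deriv2_eq hβ hβ' hμ hu hs0, Real.norm_eq_abs ((t - s) ^ (1 - β)),
        abs_of_nonneg hts]
      calc (t - s) ^ (1 - β) * ‖∑' k, mlH β μ k s‖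
          ≤ (t - s) ^ (1 - β) * (s ^ (β - 2) * D) := by
            refine mul_le_mul_of_nonneg_left ?_ hts
            calc ‖∑' k, mlH β μ k s‖ ≤ ∑' k, ‖mlH β μ k s‖ := h1
              _ ≤ _ := h2
              _ = s ^ (β - 2) * D := h3
        _ = D * (s ^ (β - 2) * (t - s) ^ (1 - β)) := by ring
  -- the equation
  · intro t ht
    have hF0 : ∀ s : ℝ, (t - s) ^ (1 - β) * mlH β μ 0 s = 0 := by
      intro s; rw [mlH_zero]; ring
    have hFint : ∀ k : ℕ, IntegrableOn (fun s : ℝ => (t - s) ^ (1 - β) * mlH β μ k s)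
        (Ioo 0 t) := by
      intro k
      cases k with
      | zero =>
        have h : (fun s : ℝ => (t - s) ^ (1 - β) * mlH β μ 0 s) = fun _ => (0:ℝ) :=
          funext hF0
        rw [h]
        exact integrableOn_zero
      | succ j => exact (mlH_int_aux hβ hβ' hμ ht j).1
    have htpow : ∀ j : ℕ, t ^ (β * (j:ℝ)) = (t ^ β) ^ j := fun j => rpow_eq_pow ht.le j
    have hs0 : Summable (fun j : ℕ => (μ * t ^ β) ^ j / Real.Gamma (β * j + 1)) := by
      refine Summable.of_nonneg_of_le (fun j => ?_) (fun j => ?_)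
        (summable_bound hβ hβ' hμ ht.le)
      · exact div_nonneg (pow_nonneg (mul_nonneg hμ (Real.rpow_nonneg ht.le β)) j)
          (gamma_pos hβ j).le
      · rw [div_le_div_iff_of_pos_right (gamma_pos hβ j)]
        have hbj : (0:ℝ) ≤ β * j := mul_nonneg (by linarith) (Nat.cast_nonneg j)
        have h1 : (1:ℝ) ≤ (β * j + 2) ^ 2 := by nlinarith
        have h2 : (0:ℝ) ≤ (μ * t ^ β) ^ j :=
          pow_nonneg (mul_nonneg hμ (Real.rpow_nonneg ht.le β)) j
        nlinarith
    have hnorm_sum : Summable (fun k : ℕ =>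
        ∫ s in Ioo (0:ℝ) t, ‖(t - s) ^ (1 - β) * mlH β μ k s‖) := by
      rw [← summable_nat_add_iff 1]
      refine (hs0.mul_left (μ * Real.Gamma (2 - β))).congr (fun j => ?_)
      rw [(mlH_int_aux hβ hβ' hμ ht j).2.2, htpow j, mul_pow]
      ring
    have hval_sum : Summable (fun k : ℕ =>
        ∫ s in Ioo (0:ℝ) t, (t - s) ^ (1 - β) * mlH β μ k s) :=
      Summable.of_norm_bounded hnorm_sum (fun k => norm_integral_le_integral_norm _)
    have hswap := integral_tsum_of_summable_integral_norm
      (F := fun k (s : ℝ) => (t - s) ^ (1 - β) * mlH β μ k s)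
      (μ := volume.restrict (Ioo 0 t)) hFint hnorm_sum
    have hpt : ∀ s ∈ Ioo (0:ℝ) t,
        (t - s) ^ (1 - β) * deriv (deriv u) s
          = ∑' k, (t - s) ^ (1 - β) * mlH β μ k s := by
      intro s hs
      rw [deriv2_eq hβ hβ' hμ hu hs.1, tsum_mul_left]
    have hzero_int : (∫ s in Ioo (0:ℝ) t, (t - s) ^ (1 - β) * mlH β μ 0 s) = 0 := by
      rw [show (fun s : ℝ => (t - s) ^ (1 - β) * mlH β μ 0 s) = fun _ => (0:ℝ) from
        funext hF0]
      simp
    calc (1 / Real.Gamma (2 - β)) *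
          ∫ s in Ioo (0:ℝ) t, (t - s) ^ (1 - β) * deriv (deriv u) s
        = (1 / Real.Gamma (2 - β)) *
          ∫ s in Ioo (0:ℝ) t, ∑' k, (t - s) ^ (1 - β) * mlH β μ k s := by
          rw [setIntegral_congr_fun measurableSet_Ioo hpt]
      _ = (1 / Real.Gamma (2 - β)) *
          ∑' k, ∫ s in Ioo (0:ℝ) t, (t - s) ^ (1 - β) * mlH β μ k s := by rw [hswap]
      _ = (1 / Real.Gamma (2 - β)) *
          ((∫ s in Ioo (0:ℝ) t, (t - s) ^ (1 - β) * mlH β μ 0 s) +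
            ∑' j, ∫ s in Ioo (0:ℝ) t, (t - s) ^ (1 - β) * mlH β μ (j+1) s) := by
          rw [Summable.tsum_eq_zero_add hval_sum]
      _ = (1 / Real.Gamma (2 - β)) *
          ∑' j : ℕ, ((-μ) ^ (j+1) * Real.Gamma (2 - β) * t ^ (β * (j:ℝ)) /
            Real.Gamma (β * (j:ℝ) + 1)) := by
          rw [hzero_int, zero_add]
          congr 1
          exact tsum_congr (fun j => (mlH_int_aux hβ hβ' hμ ht j).2.1)
      _ = (1 / Real.Gamma (2 - β)) * ((-μ) * Real.Gamma (2 - β) *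
            ∑' j : ℕ, (-μ) ^ j * t ^ (β * (j:ℝ)) / Real.Gamma (β * j + 1)) := by
          congr 1
          have hterm : ∀ j : ℕ, (-μ) ^ (j+1) * Real.Gamma (2 - β) * t ^ (β * (j:ℝ)) /
              Real.Gamma (β * (j:ℝ) + 1)
              = ((-μ) * Real.Gamma (2 - β)) *
                ((-μ) ^ j * t ^ (β * (j:ℝ)) / Real.Gamma (β * (j:ℝ) + 1)) := by
            intro j; rw [pow_succ]; ring
          rw [tsum_congr hterm, tsum_mul_left]
      _ = -μ * ∑' k : ℕ, (-μ) ^ k * t ^ (β * (k:ℝ)) / Real.Gamma (β * k + 1) := by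
          field_simp
end

section
/- Let 1 < β < 2 and μ ≥ 0, and define v(t) = ∫_0^t E_β(−μ s^β) ds for t ≥ 0, where E_β(z) = ∑_{k=0}^∞ z^k / Γ(βk + 1). Then v(0) = 0, v is twice differentiable on (0,∞) with v′(t) → 1 as t → 0⁺, for every t > 0 the function s ↦ (t−s)^{1−β} v″(s) is integrable on (0,t), and the Dzhrbashyan–Caputo fractional derivative of order β of v satisfies (1/Γ(2−β)) ∫_0^t (t−s)^{1−β} v″(s) ds = −μ v(t) for all t > 0. -/
open MeasureTheory Set Nat

lemma gamma_step {x : ℝ} (hx : 0 ≤ x) : x / Real.Gamma (x + 1) = 1 / Real.Gamma x := by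
  rcases eq_or_lt_of_le hx with h | h
  · simp [← h, Real.Gamma_zero]
  · rw [Real.Gamma_add_one h.ne']
    rw [div_mul_eq_div_div, div_self h.ne']

lemma ml_summable {β : ℝ} (hβ : 1 ≤ β) {x : ℝ} (hx : 0 ≤ x) (c : ℝ) :
    Summable (fun k : ℕ => x ^ k / Real.Gamma (β * k + c)) := by
  obtain ⟨N, hN⟩ := exists_nat_ge (2 - c)
  rw [← summable_nat_add_iff N]
  have key : ∀ n : ℕ, ((n : ℝ) + 2) ≤ β * (n + N) + c := by
    intro n
    have h0 : (0:ℝ) ≤ n := Nat.cast_nonneg n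
    have h1 : (0:ℝ) ≤ N := Nat.cast_nonneg N
    nlinarith
  have hfact : ∀ n : ℕ, ((n ! : ℝ)) ≤ Real.Gamma (β * ((n + N : ℕ) : ℝ) + c) := by
    intro n
    have h0 : (0:ℝ) ≤ n := Nat.cast_nonneg n
    have h2 : Real.Gamma ((n : ℝ) + 2) ≤ Real.Gamma (β * (n + N) + c) := by
      apply Real.Gamma_strictMonoOn_Ici.monotoneOn
      · exact mem_Ici.2 (by linarith)
      · exact mem_Ici.2 (le_trans (by linarith) (key n))
      · exact key n
    have h3 : Real.Gamma ((n : ℝ) + 2) = (n + 1)! := by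
      have : ((n : ℝ) + 2) = ((n + 1 : ℕ) : ℝ) + 1 := by push_cast; ring
      rw [this, Real.Gamma_nat_eq_factorial]
    have h4 : (n ! : ℝ) ≤ ((n + 1)! : ℝ) := by
      exact_mod_cast Nat.factorial_le (Nat.le_succ n)
    push_cast
    calc (n ! : ℝ) ≤ ((n+1)! : ℝ) := h4
      _ = Real.Gamma ((n:ℝ)+2) := h3.symm
      _ ≤ _ := h2
  refine Summable.of_nonneg_of_le ?_ ?_ ((Real.summable_pow_div_factorial |x|).mul_left (|x| ^ N))
  · intro n
    apply div_nonneg (pow_nonneg hx _)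
    exact le_trans (Nat.cast_nonneg _) (hfact n)
  · intro n
    have hfp : (0:ℝ) < n ! := by exact_mod_cast Nat.factorial_pos n
    rw [abs_of_nonneg hx]
    calc x ^ (n + N) / Real.Gamma (β * ((n + N : ℕ) : ℝ) + c)
        ≤ x ^ (n + N) / (n !) := by
          apply div_le_div_of_nonneg_left (pow_nonneg hx _) hfp (hfact n)
      _ = x ^ N * (x ^ n / n !) := by rw [pow_add]; ring

noncomputable def mlW (β μ : ℝ) (t : ℝ) : ℝ :=
  ∑' k : ℕ, (-μ) ^ k * t ^ (β * k) / Real.Gamma (β * k + 1)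
noncomputable def mlV (β μ : ℝ) (t : ℝ) : ℝ :=
  ∑' k : ℕ, (-μ) ^ k * t ^ (β * k + 1) / Real.Gamma (β * k + 2)
noncomputable def mlU (β μ : ℝ) (t : ℝ) : ℝ :=
  ∑' k : ℕ, (-μ) ^ k * t ^ (β * k - 1) / Real.Gamma (β * k)

lemma mlV_hasDerivAt {β μ : ℝ} (hβ : 1 < β) (hμ : 0 ≤ μ) {t : ℝ} (ht : 0 < t) :
    HasDerivAt (mlV β μ) (mlW β μ t) t := by
  set b := t + 1 with hbdef
  have hb0 : (0:ℝ) < b := by linarith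
  have hβ0 : (0:ℝ) < β := by linarith
  have htb : t < b := by linarith
  have hx : 0 ≤ μ * b ^ β := mul_nonneg hμ (Real.rpow_nonneg hb0.le β)
  have hu : Summable (fun k : ℕ => (μ * b ^ β) ^ k / Real.Gamma (β * k + 1)) :=
    ml_summable hβ.le hx 1
  have hyb : ∀ (y : ℝ), 0 ≤ y → y ≤ b → ∀ k : ℕ, y ^ (β * k) ≤ (b ^ β) ^ k := by
    intro y hy0 hyb k
    rw [← Real.rpow_natCast (b ^ β) k, ← Real.rpow_mul hb0.le]
    exact Real.rpow_le_rpow hy0 hyb (by positivity)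
  have key := hasDerivAt_tsum_of_isPreconnected
    (u := fun k : ℕ => (μ * b ^ β) ^ k / Real.Gamma (β * k + 1)) hu isOpen_Ioo
    (convex_Ioo (0:ℝ) b).isPreconnected
    (g := fun k y => (-μ) ^ k * y ^ (β * k + 1) / Real.Gamma (β * k + 2))
    (g' := fun k y => (-μ) ^ k * y ^ (β * k) / Real.Gamma (β * k + 1))
    (fun k y hy => ?_) (fun k y hy => ?_) (mem_Ioo.2 ⟨ht, htb⟩) ?_ (mem_Ioo.2 ⟨ht, htb⟩)
  · exact key
  · -- HasDerivAt of each term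
    have hy0 : y ≠ 0 := ne_of_gt hy.1
    have H := ((Real.hasDerivAt_rpow_const (x := y) (p := β * k + 1)
      (Or.inl hy0)).const_mul ((-μ) ^ k)).div_const (Real.Gamma (β * k + 2))
    have hΓ : Real.Gamma (β * k + 2) = (β * k + 1) * Real.Gamma (β * k + 1) := by
      rw [show β * k + 2 = (β * k + 1) + 1 by ring,
        Real.Gamma_add_one (by positivity)]
    refine H.congr_deriv (Eq.symm ?_)
    rw [show β * k + 1 - 1 = β * k by ring, hΓ]
    have hΓ1 : Real.Gamma (β * k + 1) ≠ 0 :=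
      (Real.Gamma_pos_of_pos (by positivity)).ne'
    field_simp
  · -- norm bound
    have hΓpos : 0 < Real.Gamma (β * k + 1) := Real.Gamma_pos_of_pos (by positivity)
    rw [Real.norm_eq_abs, abs_div, abs_mul, abs_pow, abs_neg, abs_of_nonneg hμ,
      abs_of_nonneg (Real.rpow_nonneg hy.1.le _), abs_of_nonneg hΓpos.le]
    calc μ ^ k * y ^ (β * k) / Real.Gamma (β * k + 1)
        ≤ μ ^ k * (b ^ β) ^ k / Real.Gamma (β * k + 1) := by
          gcongr
          exact hyb y hy.1.le hy.2.le k
      _ = (μ * b ^ β) ^ k / Real.Gamma (β * k + 1) := by rw [mul_pow]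
  · -- summability at t
    apply Summable.of_norm_bounded ((ml_summable hβ.le hx 2).mul_left b)
    intro k
    have hΓpos : 0 < Real.Gamma (β * k + 2) := Real.Gamma_pos_of_pos (by positivity)
    rw [Real.norm_eq_abs, abs_div, abs_mul, abs_pow, abs_neg, abs_of_nonneg hμ,
      abs_of_nonneg (Real.rpow_nonneg ht.le _), abs_of_nonneg hΓpos.le]
    have h1 : t ^ (β * k + 1) ≤ b * (b ^ β) ^ k := by
      calc t ^ (β * k + 1) ≤ b ^ (β * k + 1) :=
            Real.rpow_le_rpow ht.le htb.le (by positivity)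
        _ = b ^ (β * k) * b := by rw [Real.rpow_add hb0, Real.rpow_one]
        _ ≤ (b ^ β) ^ k * b := by gcongr; exact hyb b hb0.le le_rfl k
        _ = b * (b ^ β) ^ k := by ring
    calc μ ^ k * t ^ (β * k + 1) / Real.Gamma (β * k + 2)
        ≤ μ ^ k * (b * (b ^ β) ^ k) / Real.Gamma (β * k + 2) := by gcongr
      _ = b * ((μ * b ^ β) ^ k / Real.Gamma (β * k + 2)) := by rw [mul_pow]; ring

lemma mlW_hasDerivAt {β μ : ℝ} (hβ : 1 < β) (hμ : 0 ≤ μ) {t : ℝ} (ht : 0 < t) :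
    HasDerivAt (mlW β μ) (mlU β μ t) t := by
  set b := t + 1 with hbdef
  have hb0 : (0:ℝ) < b := by linarith
  have hβ0 : (0:ℝ) < β := by linarith
  have htb : t < b := by linarith
  have hx : 0 ≤ μ * b ^ β := mul_nonneg hμ (Real.rpow_nonneg hb0.le β)
  have hyb : ∀ (y : ℝ), 0 ≤ y → y ≤ b → ∀ k : ℕ, y ^ (β * k) ≤ (b ^ β) ^ k := by
    intro y hy0 hyb k
    rw [← Real.rpow_natCast (b ^ β) k, ← Real.rpow_mul hb0.le]
    exact Real.rpow_le_rpow hy0 hyb (by positivity)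
  have hu : Summable (fun k : ℕ => b⁻¹ * ((μ * b ^ β) ^ k / Real.Gamma (β * k))) :=
    ((ml_summable hβ.le hx 0).mul_left _).congr (by intro k; rw [add_zero])
  have key := hasDerivAt_tsum_of_isPreconnected
    (u := fun k : ℕ => b⁻¹ * ((μ * b ^ β) ^ k / Real.Gamma (β * k))) hu isOpen_Ioo
    (convex_Ioo (0:ℝ) b).isPreconnected
    (g := fun k y => (-μ) ^ k * y ^ (β * k) / Real.Gamma (β * k + 1))
    (g' := fun k y => (-μ) ^ k * y ^ (β * k - 1) / Real.Gamma (β * k))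
    (fun k y hy => ?_) (fun k y hy => ?_) (mem_Ioo.2 ⟨ht, htb⟩) ?_ (mem_Ioo.2 ⟨ht, htb⟩)
  · exact key
  · have hy0 : y ≠ 0 := ne_of_gt hy.1
    have H := ((Real.hasDerivAt_rpow_const (x := y) (p := β * k)
      (Or.inl hy0)).const_mul ((-μ) ^ k)).div_const (Real.Gamma (β * k + 1))
    refine H.congr_deriv (Eq.symm ?_)
    calc (-μ) ^ k * y ^ (β * k - 1) / Real.Gamma (β * k)
        = ((-μ) ^ k * y ^ (β * k - 1)) * (1 / Real.Gamma (β * k)) := by ring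
      _ = ((-μ) ^ k * y ^ (β * k - 1)) * (β * k / Real.Gamma (β * k + 1)) := by
          rw [gamma_step (by positivity)]
      _ = (-μ) ^ k * (β * k * y ^ (β * k - 1)) / Real.Gamma (β * k + 1) := by ring
  · rcases Nat.eq_zero_or_pos k with rfl | hk
    · simp [Real.Gamma_zero]
    · have hβk : (0:ℝ) < β * k := by
        have : (1:ℝ) ≤ k := by exact_mod_cast hk
        nlinarith
      have hΓpos : 0 < Real.Gamma (β * k) := Real.Gamma_pos_of_pos hβk
      rw [Real.norm_eq_abs, abs_div, abs_mul, abs_pow, abs_neg, abs_of_nonneg hμ,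
        abs_of_nonneg (Real.rpow_nonneg hy.1.le _), abs_of_nonneg hΓpos.le]
      have h1 : y ^ (β * k - 1) ≤ b⁻¹ * (b ^ β) ^ k := by
        have h1k : (1:ℝ) ≤ (k:ℝ) := by exact_mod_cast hk
        have he : (0:ℝ) ≤ β * k - 1 := by nlinarith
        calc y ^ (β * k - 1) ≤ b ^ (β * k - 1) :=
              Real.rpow_le_rpow hy.1.le hy.2.le he
          _ = b ^ (β * k) / b ^ (1:ℝ) := Real.rpow_sub hb0 _ _
          _ = b⁻¹ * b ^ (β * k) := by rw [Real.rpow_one]; ring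
          _ ≤ b⁻¹ * (b ^ β) ^ k := by gcongr; exact hyb b hb0.le le_rfl k
      calc μ ^ k * y ^ (β * k - 1) / Real.Gamma (β * k)
          ≤ μ ^ k * (b⁻¹ * (b ^ β) ^ k) / Real.Gamma (β * k) := by gcongr
        _ = b⁻¹ * ((μ * b ^ β) ^ k / Real.Gamma (β * k)) := by rw [mul_pow]; ring
  · apply Summable.of_norm_bounded (ml_summable hβ.le hx 1)
    intro k
    have hΓpos : 0 < Real.Gamma (β * k + 1) := Real.Gamma_pos_of_pos (by positivity)
    rw [Real.norm_eq_abs, abs_div, abs_mul, abs_pow, abs_neg, abs_of_nonneg hμ,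
      abs_of_nonneg (Real.rpow_nonneg ht.le _), abs_of_nonneg hΓpos.le]
    calc μ ^ k * t ^ (β * k) / Real.Gamma (β * k + 1)
        ≤ μ ^ k * (b ^ β) ^ k / Real.Gamma (β * k + 1) := by
          gcongr
          exact hyb t ht.le htb.le k
      _ = (μ * b ^ β) ^ k / Real.Gamma (β * k + 1) := by rw [mul_pow]

lemma mlW_zero {β μ : ℝ} (hβ : 1 < β) : mlW β μ 0 = 1 := by
  rw [mlW, tsum_eq_single 0]
  · norm_num
  · intro k hk
    have hβk : (0:ℝ) < β * k := by
      have : (1:ℝ) ≤ k := by exact_mod_cast Nat.one_le_iff_ne_zero.2 hk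
      nlinarith
    rw [Real.zero_rpow hβk.ne']
    simp

lemma mlW_tendsto {β μ : ℝ} (hβ : 1 < β) (hμ : 0 ≤ μ) :
    Filter.Tendsto (mlW β μ) (nhdsWithin 0 (Ioi 0)) (nhds 1) := by
  have hβ0 : (0:ℝ) < β := by linarith
  have hcont : ContinuousOn (mlW β μ) (Icc 0 1) := by
    apply continuousOn_tsum (u := fun k : ℕ => μ ^ k / Real.Gamma (β * k + 1))
    · intro k
      rcases Nat.eq_zero_or_pos k with rfl | hk
      · have h1 : ∀ y : ℝ, (-μ) ^ (0:ℕ) * y ^ (β * ((0:ℕ):ℝ)) / Real.Gamma (β * ((0:ℕ):ℝ) + 1) = 1 := by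
          intro y; norm_num
        exact (continuousOn_const (c := (1:ℝ))).congr fun y _ => h1 y
      · refine Continuous.continuousOn ?_
        refine Continuous.div_const (Continuous.mul continuous_const ?_) _
        refine continuous_iff_continuousAt.2 fun y => Real.continuousAt_rpow_const y _ (Or.inr ?_)
        have h1k : (1:ℝ) ≤ (k:ℝ) := by exact_mod_cast hk
        nlinarith
    · exact ml_summable hβ.le hμ 1
    · intro k y hy
      have hΓpos : 0 < Real.Gamma (β * k + 1) := Real.Gamma_pos_of_pos (by positivity)
      rw [Real.norm_eq_abs, abs_div, abs_mul, abs_pow, abs_neg, abs_of_nonneg hμ,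
        abs_of_nonneg (Real.rpow_nonneg hy.1 _), abs_of_nonneg hΓpos.le]
      have h1 : y ^ (β * k) ≤ 1 := Real.rpow_le_one hy.1 hy.2 (by positivity)
      calc μ ^ k * y ^ (β * k) / Real.Gamma (β * k + 1)
          ≤ μ ^ k * 1 / Real.Gamma (β * k + 1) := by gcongr
        _ = μ ^ k / Real.Gamma (β * k + 1) := by ring
  have h0 : Filter.Tendsto (mlW β μ) (nhdsWithin 0 (Icc 0 1)) (nhds 1) := by
    have := hcont.continuousWithinAt (x := 0) (by constructor <;> norm_num)
    rwa [ContinuousWithinAt, mlW_zero hβ] at this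
  have : nhdsWithin (0:ℝ) (Ioi 0) = nhdsWithin 0 (Ioo 0 1) :=
    (nhdsWithin_Ioo_eq_nhdsGT zero_lt_one).symm
  rw [this]
  exact h0.mono_left (nhdsWithin_mono 0 Ioo_subset_Icc_self)

lemma ml_term_summable {β μ : ℝ} (hβ : 1 < β) (hμ : 0 ≤ μ) {t : ℝ} (ht : 0 ≤ t)
    (c : ℝ) (hc : 0 ≤ c) {d : ℝ} (hd : 0 < d) :
    Summable (fun k : ℕ => μ ^ k * t ^ (β * k + c) / Real.Gamma (β * k + d)) := by
  have hβ0 : (0:ℝ) < β := by linarith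
  set b := t + 1 with hbdef
  have hb0 : (0:ℝ) < b := by linarith
  have htb : t ≤ b := by linarith
  have hx : 0 ≤ μ * b ^ β := mul_nonneg hμ (Real.rpow_nonneg hb0.le β)
  refine Summable.of_nonneg_of_le ?_ ?_
    (((ml_summable hβ.le hx d).mul_left (b ^ c)))
  · intro k
    have hΓpos : 0 < Real.Gamma (β * k + d) := Real.Gamma_pos_of_pos (by positivity)
    positivity
  · intro k
    have hΓpos : 0 < Real.Gamma (β * k + d) := Real.Gamma_pos_of_pos (by positivity)
    have h1 : t ^ (β * k + c) ≤ b ^ c * (b ^ β) ^ k := by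
      calc t ^ (β * k + c) ≤ b ^ (β * k + c) :=
            Real.rpow_le_rpow ht htb (by positivity)
        _ = b ^ (β * k) * b ^ c := by rw [Real.rpow_add hb0]
        _ = (b ^ β) ^ k * b ^ c := by
            rw [← Real.rpow_natCast (b ^ β) k, ← Real.rpow_mul hb0.le]
        _ = b ^ c * (b ^ β) ^ k := by ring
    calc μ ^ k * t ^ (β * k + c) / Real.Gamma (β * k + d)
        ≤ μ ^ k * (b ^ c * (b ^ β) ^ k) / Real.Gamma (β * k + d) := by gcongr
      _ = b ^ c * ((μ * b ^ β) ^ k / Real.Gamma (β * k + d)) := by rw [mul_pow]; ring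

lemma rpow_integrableOn {r : ℝ} (hr : -1 < r) {t : ℝ} (ht : 0 < t) :
    IntegrableOn (fun s : ℝ => s ^ r) (Ioo 0 t) := by
  have := (intervalIntegral.intervalIntegrable_rpow' (a := 0) (b := t) hr)
  rw [intervalIntegrable_iff_integrableOn_Ioc_of_le ht.le] at this
  exact this.mono_set Ioo_subset_Ioc_self

lemma rpow_integral_Ioo {r : ℝ} (hr : -1 < r) {t : ℝ} (ht : 0 < t) :
    ∫ s in Ioo 0 t, s ^ r = t ^ (r + 1) / (r + 1) := by
  rw [← integral_Ioc_eq_integral_Ioo, ← intervalIntegral.integral_of_le ht.le,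
    integral_rpow (Or.inl hr), Real.zero_rpow (by linarith : r + 1 ≠ 0), sub_zero]

lemma integral_mlW_eq {β μ : ℝ} (hβ : 1 < β) (hμ : 0 ≤ μ) {t : ℝ} (ht : 0 < t) :
    (∫ s in Ioo 0 t, ∑' k : ℕ, (-μ) ^ k * s ^ (β * k) / Real.Gamma (β * k + 1))
      = mlV β μ t := by
  have hβ0 : (0:ℝ) < β := by linarith
  set F : ℕ → ℝ → ℝ := fun k s => (-μ) ^ k * s ^ (β * k) / Real.Gamma (β * k + 1) with hF
  have hInt : ∀ k, IntegrableOn (F k) (Ioo 0 t) := by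
    intro k
    exact ((rpow_integrableOn (neg_one_lt_zero.trans_le (by positivity)) ht).const_mul
      ((-μ) ^ k)).div_const _
  have hΓ2 : ∀ k : ℕ, Real.Gamma (β * k + 2) = (β * k + 1) * Real.Gamma (β * k + 1) := by
    intro k
    rw [show β * k + 2 = (β * k + 1) + 1 by ring, Real.Gamma_add_one (by positivity)]
  have hval : ∀ k : ℕ, (∫ s in Ioo 0 t, F k s)
      = (-μ) ^ k * t ^ (β * k + 1) / Real.Gamma (β * k + 2) := by
    intro k
    have : (∫ s in Ioo 0 t, F k s)
        = ((-μ) ^ k / Real.Gamma (β * k + 1)) * ∫ s in Ioo 0 t, s ^ (β * k) := by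
      rw [← integral_const_mul]
      congr 1 with s
      simp only [hF]; ring
    rw [this, rpow_integral_Ioo (neg_one_lt_zero.trans_le (by positivity)) ht, hΓ2 k,
      _root_.div_mul_div_comm]
    congr 1
    ring
  have hnormval : ∀ k : ℕ, (∫ s in Ioo 0 t, ‖F k s‖)
      = μ ^ k * t ^ (β * k + 1) / Real.Gamma (β * k + 2) := by
    intro k
    have hΓpos : 0 < Real.Gamma (β * k + 1) := Real.Gamma_pos_of_pos (by positivity)
    have heq : ∀ s ∈ Ioo (0:ℝ) t, ‖F k s‖ = μ ^ k * s ^ (β * k) / Real.Gamma (β * k + 1) := by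
      intro s hs
      simp only [hF]
      rw [Real.norm_eq_abs, abs_div, abs_mul, abs_pow, abs_neg, abs_of_nonneg hμ,
        abs_of_nonneg (Real.rpow_nonneg hs.1.le _), abs_of_nonneg hΓpos.le]
    rw [setIntegral_congr_fun measurableSet_Ioo heq]
    have : (∫ s in Ioo 0 t, μ ^ k * s ^ (β * k) / Real.Gamma (β * k + 1))
        = (μ ^ k / Real.Gamma (β * k + 1)) * ∫ s in Ioo 0 t, s ^ (β * k) := by
      rw [← integral_const_mul]
      congr 1 with s
      ring
    rw [this, rpow_integral_Ioo (neg_one_lt_zero.trans_le (by positivity)) ht, hΓ2 k,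
      _root_.div_mul_div_comm]
    congr 1
    ring
  have hsum : Summable fun k => ∫ s in Ioo 0 t, ‖F k s‖ := by
    apply Summable.congr (ml_term_summable hβ hμ ht.le 1 zero_le_one two_pos)
    intro k
    rw [hnormval k]
  have := integral_tsum_of_summable_integral_norm (μ := volume.restrict (Ioo 0 t))
    (F := F) hInt hsum
  rw [← this, mlV]
  exact tsum_congr hval

lemma real_beta_integral {p q : ℝ} (hp : 0 < p) (hq : 0 < q) {t : ℝ} (ht : 0 < t) :
    (∫ s in Ioo 0 t, s ^ (p - 1) * (t - s) ^ (q - 1))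
      = Real.Gamma p * Real.Gamma q / Real.Gamma (p + q) * t ^ (p + q - 1) := by
  have key : ((∫ s in Ioo 0 t, s ^ (p - 1) * (t - s) ^ (q - 1) : ℝ) : ℂ)
      = ((Real.Gamma p * Real.Gamma q / Real.Gamma (p + q) * t ^ (p + q - 1) : ℝ) : ℂ) := by
    have h1 : ((∫ s in Ioo 0 t, s ^ (p - 1) * (t - s) ^ (q - 1) : ℝ) : ℂ)
        = ∫ x in (0:ℝ)..t, (x : ℂ) ^ ((p : ℂ) - 1) * ((t : ℂ) - x) ^ ((q : ℂ) - 1) := by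
      rw [← integral_Ioc_eq_integral_Ioo, ← intervalIntegral.integral_of_le ht.le,
        ← intervalIntegral.integral_ofReal]
      apply intervalIntegral.integral_congr
      intro x hx
      rw [uIcc_of_le ht.le] at hx
      have hx0 : (0:ℝ) ≤ x := hx.1
      have hxt : (0:ℝ) ≤ t - x := by linarith [hx.2]
      simp only
      rw [Complex.ofReal_mul, Complex.ofReal_cpow hx0, Complex.ofReal_cpow hxt]
      push_cast
      ring_nf
    rw [h1]
    have h2 := Complex.betaIntegral_scaled p q ht
    have h2' : ∫ x in (0:ℝ)..t, (x : ℂ) ^ ((p : ℂ) - 1) * ((t : ℂ) - x) ^ ((q : ℂ) - 1)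
        = (t : ℂ) ^ ((p : ℂ) + q - 1) * Complex.betaIntegral p q := h2
    rw [h2']
    have h3 := Complex.Gamma_mul_Gamma_eq_betaIntegral
      (by simpa using hp : 0 < (p : ℂ).re) (by simpa using hq : 0 < (q : ℂ).re)
    have h4 : Complex.Gamma ((p : ℂ) + q) ≠ 0 := by
      rw [show ((p : ℂ) + q) = ((p + q : ℝ) : ℂ) by push_cast; ring, Complex.Gamma_ofReal]
      exact_mod_cast (Real.Gamma_pos_of_pos (by linarith)).ne'
    have h5 : Complex.betaIntegral p q
        = Complex.Gamma p * Complex.Gamma q / Complex.Gamma ((p : ℂ) + q) := by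
      rw [eq_div_iff h4]
      linear_combination -h3
    rw [h5]
    have h6 : ((t : ℂ) ^ ((p : ℂ) + q - 1)) = ((t ^ (p + q - 1) : ℝ) : ℂ) := by
      rw [Complex.ofReal_cpow ht.le]
      push_cast
      ring_nf
    rw [h6, Complex.Gamma_ofReal, Complex.Gamma_ofReal,
      show ((p : ℂ) + q) = ((p + q : ℝ) : ℂ) by push_cast; ring, Complex.Gamma_ofReal]
    push_cast
    ring
  exact_mod_cast key

lemma mlU_continuousOn {β μ : ℝ} (hβ : 1 < β) (hμ : 0 ≤ μ) {b : ℝ} (hb : 0 ≤ b) :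
    ContinuousOn (mlU β μ) (Icc 0 b) := by
  have hβ0 : (0:ℝ) < β := by linarith
  set c := b + 1 with hcdef
  have hc1 : (1:ℝ) ≤ c := by linarith
  have hc0 : (0:ℝ) < c := by linarith
  have hx : 0 ≤ μ * c ^ β := mul_nonneg hμ (Real.rpow_nonneg hc0.le β)
  apply continuousOn_tsum (u := fun k : ℕ => (μ * c ^ β) ^ k / Real.Gamma (β * k))
  · intro k
    rcases Nat.eq_zero_or_pos k with rfl | hk
    · have h1 : ∀ y : ℝ, (-μ) ^ (0:ℕ) * y ^ (β * ((0:ℕ):ℝ) - 1) / Real.Gamma (β * ((0:ℕ):ℝ)) = 0 := by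
        intro y
        norm_num [Real.Gamma_zero]
      exact (continuousOn_const (c := (0:ℝ))).congr fun y _ => h1 y
    · refine Continuous.continuousOn ?_
      refine Continuous.div_const (Continuous.mul continuous_const ?_) _
      refine continuous_iff_continuousAt.2 fun y => Real.continuousAt_rpow_const y _ (Or.inr ?_)
      have h1k : (1:ℝ) ≤ (k:ℝ) := by exact_mod_cast hk
      nlinarith
  · exact (ml_summable hβ.le hx 0).congr (by intro k; rw [add_zero])
  · intro k y hy
    rcases Nat.eq_zero_or_pos k with rfl | hk
    · norm_num [Real.Gamma_zero]
    · have h1k : (1:ℝ) ≤ (k:ℝ) := by exact_mod_cast hk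
      have hβk : (0:ℝ) < β * k := by nlinarith
      have hΓpos : 0 < Real.Gamma (β * k) := Real.Gamma_pos_of_pos hβk
      rw [Real.norm_eq_abs, abs_div, abs_mul, abs_pow, abs_neg, abs_of_nonneg hμ,
        abs_of_nonneg (Real.rpow_nonneg hy.1 _), abs_of_nonneg hΓpos.le]
      have h1 : y ^ (β * k - 1) ≤ (c ^ β) ^ k := by
        calc y ^ (β * k - 1) ≤ c ^ (β * k - 1) :=
              Real.rpow_le_rpow hy.1 (by linarith [hy.2]) (by nlinarith)
          _ ≤ c ^ (β * k) := Real.rpow_le_rpow_of_exponent_le hc1 (by linarith)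
          _ = (c ^ β) ^ k := by
              rw [← Real.rpow_natCast (c ^ β) k, ← Real.rpow_mul hc0.le]
      calc μ ^ k * y ^ (β * k - 1) / Real.Gamma (β * k)
          ≤ μ ^ k * (c ^ β) ^ k / Real.Gamma (β * k) := by gcongr
        _ = (μ * c ^ β) ^ k / Real.Gamma (β * k) := by rw [mul_pow]

lemma mlU_caputo {β μ : ℝ} (hβ : 1 < β) (hβ' : β < 2) (hμ : 0 ≤ μ) {t : ℝ} (ht : 0 < t) :
    IntegrableOn (fun s : ℝ => (t - s) ^ (1 - β) * mlU β μ s) (Ioo 0 t) ∧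
    (∫ s in Ioo 0 t, (t - s) ^ (1 - β) * mlU β μ s)
      = Real.Gamma (2 - β) * (-μ * mlV β μ t) := by
  have hβ0 : (0:ℝ) < β := by linarith
  have h2β : (0:ℝ) < 2 - β := by linarith
  have h1β : (-1:ℝ) < 1 - β := by linarith
  -- integrability of the kernel
  have hrefl : IntegrableOn (fun s : ℝ => (t - s) ^ (1 - β)) (Ioo 0 t) := by
    have A := intervalIntegral.intervalIntegrable_rpow' (a := 0) (b := t) h1β
    have B := (A.comp_sub_left t).symm
    rw [sub_zero, sub_self] at B
    rw [intervalIntegrable_iff_integrableOn_Ioc_of_le ht.le] at B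
    exact B.mono_set Ioo_subset_Ioc_self
  -- integrability of the full integrand
  have hcont : ContinuousOn (mlU β μ) (Icc 0 t) := mlU_continuousOn hβ hμ ht.le
  obtain ⟨C, hC⟩ := isCompact_Icc.exists_bound_of_continuousOn hcont
  have hmeas : AEStronglyMeasurable (mlU β μ) (volume.restrict (Ioo 0 t)) :=
    (hcont.mono Ioo_subset_Icc_self).aestronglyMeasurable measurableSet_Ioo
  have hbd : ∀ᵐ s ∂(volume.restrict (Ioo 0 t)), ‖mlU β μ s‖ ≤ C := by
    rw [ae_restrict_iff' measurableSet_Ioo]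
    exact ae_of_all _ fun s hs => hC s (Ioo_subset_Icc_self hs)
  have hInt : IntegrableOn (fun s : ℝ => (t - s) ^ (1 - β) * mlU β μ s) (Ioo 0 t) := by
    have := hrefl.bdd_mul (c := C) hmeas hbd
    exact this.congr (Filter.Eventually.of_forall fun s => mul_comm _ _)
  refine ⟨hInt, ?_⟩
  -- the term functions
  set G : ℕ → ℝ → ℝ := fun k s =>
    ((-μ) ^ k / Real.Gamma (β * k)) * (s ^ (β * k - 1) * (t - s) ^ (1 - β)) with hG
  have hβk1 : ∀ k : ℕ, (0:ℝ) < β * (k + 1 : ℕ) := by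
    intro k
    have : (1:ℝ) ≤ ((k + 1 : ℕ) : ℝ) := by exact_mod_cast Nat.succ_le_succ (Nat.zero_le k)
    nlinarith
  have hGzero : G 0 = fun _ => 0 := by
    funext s
    simp [hG, Real.Gamma_zero]
  -- integrability of each term
  have hGint : ∀ k, IntegrableOn (G k) (Ioo 0 t) := by
    intro k
    rcases Nat.eq_zero_or_pos k with rfl | hk
    · rw [hGzero]; exact integrableOn_const measure_Ioo_lt_top.ne
    · have h1k : (1:ℝ) ≤ (k:ℝ) := by exact_mod_cast hk
      have hmeask : AEStronglyMeasurable (fun s : ℝ => s ^ (β * k - 1))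
          (volume.restrict (Ioo 0 t)) := by
        refine Continuous.aestronglyMeasurable ?_
        refine continuous_iff_continuousAt.2 fun y => Real.continuousAt_rpow_const y _ (Or.inr ?_)
        nlinarith
      have hbdk : ∀ᵐ s ∂(volume.restrict (Ioo 0 t)), ‖s ^ (β * k - 1)‖ ≤ t ^ (β * k - 1) := by
        rw [ae_restrict_iff' measurableSet_Ioo]
        refine ae_of_all _ fun s hs => ?_
        rw [Real.norm_eq_abs, abs_of_nonneg (Real.rpow_nonneg hs.1.le _)]
        exact Real.rpow_le_rpow hs.1.le hs.2.le (by nlinarith)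
      exact ((hrefl.bdd_mul hmeask hbdk).congr
        (Filter.Eventually.of_forall fun s => by ring)).const_mul _
  -- value of each term integral
  have hIval : ∀ k : ℕ, (∫ s in Ioo 0 t, G (k + 1) s)
      = (Real.Gamma (2 - β) * -μ) * ((-μ) ^ k * t ^ (β * k + 1) / Real.Gamma (β * k + 2)) := by
    intro k
    have hp : (0:ℝ) < β * ((k + 1 : ℕ) : ℝ) := hβk1 k
    have hbeta := real_beta_integral hp h2β ht
    have he1 : β * ((k + 1 : ℕ) : ℝ) + (2 - β) = β * k + 2 := by push_cast; ring
    have he2 : β * ((k + 1 : ℕ) : ℝ) + (2 - β) - 1 = β * k + 1 := by push_cast; ring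
    have he3 : (2:ℝ) - β - 1 = 1 - β := by ring
    rw [he2, he1, he3] at hbeta
    have : (∫ s in Ioo 0 t, G (k + 1) s)
        = ((-μ) ^ (k + 1) / Real.Gamma (β * ((k + 1 : ℕ) : ℝ)))
          * ∫ s in Ioo 0 t, s ^ (β * ((k + 1 : ℕ) : ℝ) - 1) * (t - s) ^ (1 - β) := by
      rw [← integral_const_mul]
    rw [this, hbeta]
    have hΓne : Real.Gamma (β * ((k + 1 : ℕ) : ℝ)) ≠ 0 := (Real.Gamma_pos_of_pos hp).ne'
    field_simp
    ring
  -- norm integrals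
  have hNval : ∀ k : ℕ, (∫ s in Ioo 0 t, ‖G (k + 1) s‖)
      = (Real.Gamma (2 - β) * μ) * (μ ^ k * t ^ (β * k + 1) / Real.Gamma (β * k + 2)) := by
    intro k
    have hp : (0:ℝ) < β * ((k + 1 : ℕ) : ℝ) := hβk1 k
    have hΓpos : 0 < Real.Gamma (β * ((k + 1 : ℕ) : ℝ)) := Real.Gamma_pos_of_pos hp
    have heq : ∀ s ∈ Ioo (0:ℝ) t, ‖G (k + 1) s‖
        = (μ ^ (k + 1) / Real.Gamma (β * ((k + 1 : ℕ) : ℝ)))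
          * (s ^ (β * ((k + 1 : ℕ) : ℝ) - 1) * (t - s) ^ (1 - β)) := by
      intro s hs
      have h1 : (0:ℝ) ≤ s ^ (β * ((k + 1 : ℕ) : ℝ) - 1) := Real.rpow_nonneg hs.1.le _
      have h2 : (0:ℝ) ≤ (t - s) ^ (1 - β) := Real.rpow_nonneg (by linarith [hs.2]) _
      simp only [hG]
      rw [Real.norm_eq_abs, abs_mul, abs_div, abs_pow, abs_neg, abs_of_nonneg hμ,
        abs_of_nonneg hΓpos.le, abs_mul, abs_of_nonneg h1, abs_of_nonneg h2]
    rw [setIntegral_congr_fun measurableSet_Ioo heq, integral_const_mul]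
    have hbeta := real_beta_integral hp h2β ht
    have he1 : β * ((k + 1 : ℕ) : ℝ) + (2 - β) = β * k + 2 := by push_cast; ring
    have he2 : β * ((k + 1 : ℕ) : ℝ) + (2 - β) - 1 = β * k + 1 := by push_cast; ring
    have he3 : (2:ℝ) - β - 1 = 1 - β := by ring
    rw [he2, he1, he3] at hbeta
    rw [hbeta]
    field_simp
    ring
  have hNsum : Summable (fun k => ∫ s in Ioo 0 t, ‖G k s‖) := by
    rw [← summable_nat_add_iff 1]
    apply Summable.congr (((ml_term_summable hβ hμ ht.le 1 zero_le_one two_pos).mul_left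
      (Real.Gamma (2 - β) * μ)))
    intro k
    rw [hNval k]
  -- swap sum and integral
  have hswap := integral_tsum_of_summable_integral_norm (μ := volume.restrict (Ioo 0 t))
    (F := G) hGint hNsum
  have hptwise : ∀ s ∈ Ioo (0:ℝ) t, (∑' k, G k s) = (t - s) ^ (1 - β) * mlU β μ s := by
    intro s hs
    rw [mlU, ← tsum_mul_left]
    exact tsum_congr fun k => by simp only [hG]; ring
  rw [← setIntegral_congr_fun measurableSet_Ioo hptwise, ← hswap]
  -- compute the sum
  have hIsummable : Summable (fun k => ∫ s in Ioo 0 t, G k s) := by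
    apply Summable.of_norm_bounded hNsum
    exact fun k => norm_integral_le_integral_norm _
  rw [hIsummable.tsum_eq_zero_add]
  have hI0 : (∫ s in Ioo 0 t, G 0 s) = 0 := by rw [hGzero]; simp
  rw [hI0, zero_add]
  calc (∑' k : ℕ, ∫ s in Ioo 0 t, G (k + 1) s)
      = ∑' k : ℕ, (Real.Gamma (2 - β) * -μ)
        * ((-μ) ^ k * t ^ (β * k + 1) / Real.Gamma (β * k + 2)) := tsum_congr hIval
    _ = (Real.Gamma (2 - β) * -μ) * mlV β μ t := by rw [tsum_mul_left, mlV]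
    _ = Real.Gamma (2 - β) * (-μ * mlV β μ t) := by ring

/-- For `1 < β < 2` and `μ ≥ 0`, the function `v(t) = ∫₀ᵗ E_β(-μ s^β) ds`
satisfies `v(0) = 0`, is twice differentiable on `(0,∞)` with `v'(t) → 1` as
`t → 0⁺`, `(t-s)^{1-β} v''(s)` is integrable on `(0,t)` for each `t > 0`, and
solves the fractional wave type equation
`(1/Γ(2-β)) ∫₀ᵗ (t-s)^{1-β} v''(s) ds = -μ v(t)` for `t > 0`. -/
theorem mittagLeffler_integral_caputo_wave (β μ : ℝ) (hβ : 1 < β) (hβ' : β < 2) (hμ : 0 ≤ μ)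
    (v : ℝ → ℝ)
    (hv : v = fun t : ℝ =>
      ∫ s in Ioo 0 t, ∑' k : ℕ, (-μ) ^ k * s ^ (β * k) / Real.Gamma (β * k + 1)) :
    v 0 = 0 ∧
    (∀ t > (0 : ℝ), DifferentiableAt ℝ v t ∧ DifferentiableAt ℝ (deriv v) t) ∧
    Filter.Tendsto (deriv v) (nhdsWithin 0 (Ioi 0)) (nhds 1) ∧
    (∀ t > (0 : ℝ),
      IntegrableOn (fun s : ℝ => (t - s) ^ (1 - β) * deriv (deriv v) s) (Ioo 0 t)) ∧
    (∀ t > (0 : ℝ),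
      (1 / Real.Gamma (2 - β)) * ∫ s in Ioo 0 t, (t - s) ^ (1 - β) * deriv (deriv v) s
        = -μ * v t) := by
  have hvV : ∀ t : ℝ, 0 < t → v t = mlV β μ t := by
    intro t ht
    simp only [hv]
    exact integral_mlW_eq hβ hμ ht
  have hDV : ∀ {t : ℝ}, 0 < t → HasDerivAt v (mlW β μ t) t := by
    intro t ht
    have hev : v =ᶠ[nhds t] mlV β μ :=
      Filter.eventuallyEq_of_mem (Ioi_mem_nhds ht) fun x hx => hvV x hx
    exact (mlV_hasDerivAt hβ hμ ht).congr_of_eventuallyEq hev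
  have hderiv1 : ∀ t : ℝ, 0 < t → deriv v t = mlW β μ t := fun t ht => (hDV ht).deriv
  have hDW : ∀ {t : ℝ}, 0 < t → HasDerivAt (deriv v) (mlU β μ t) t := by
    intro t ht
    have hev : deriv v =ᶠ[nhds t] mlW β μ :=
      Filter.eventuallyEq_of_mem (Ioi_mem_nhds ht) fun x hx => hderiv1 x hx
    exact (mlW_hasDerivAt hβ hμ ht).congr_of_eventuallyEq hev
  have hderiv2 : ∀ t : ℝ, 0 < t → deriv (deriv v) t = mlU β μ t := fun t ht => (hDW ht).deriv
  refine ⟨?_, ?_, ?_, ?_, ?_⟩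
  · simp [hv]
  · exact fun t ht => ⟨(hDV ht).differentiableAt, (hDW ht).differentiableAt⟩
  · apply (mlW_tendsto hβ hμ).congr'
    exact Filter.eventuallyEq_of_mem self_mem_nhdsWithin fun x hx => (hderiv1 x hx).symm
  · intro t ht
    have heq : (fun s : ℝ => (t - s) ^ (1 - β) * mlU β μ s)
        =ᵐ[volume.restrict (Ioo 0 t)] fun s : ℝ => (t - s) ^ (1 - β) * deriv (deriv v) s := by
      rw [Filter.EventuallyEq, ae_restrict_iff' measurableSet_Ioo]
      exact ae_of_all _ fun s hs => by rw [hderiv2 s hs.1]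
    exact ((mlU_caputo hβ hβ' hμ ht).1).congr heq
  · intro t ht
    have heq : ∀ s ∈ Ioo (0:ℝ) t,
        (t - s) ^ (1 - β) * deriv (deriv v) s = (t - s) ^ (1 - β) * mlU β μ s :=
      fun s hs => by rw [hderiv2 s hs.1]
    rw [setIntegral_congr_fun measurableSet_Ioo heq, (mlU_caputo hβ hβ' hμ ht).2, hvV t ht]
    have hΓ : Real.Gamma (2 - β) ≠ 0 := (Real.Gamma_pos_of_pos (by linarith)).ne'
    field_simp
end

section
/- Let (X, μ) be a σ-finite measure space, let a : X → [0, ∞) be a measurable function with μ({x : a(x) = 0}) = 0, let φ : [0, ∞) → ℝ be Borel measurable, and let ψ : [0, ∞) → ℝ be a continuous, monotonically decreasing function with ψ(0) = 1, lim_{v→∞} ψ(v) = 0, and |φ(v)| ≤ ψ(v) for all v ∈ [0, ∞). Then for every 1 ≤ r < ∞, the weak-L^r quasinorm of φ ∘ a satisfies sup_{γ > 0} γ · (μ({x ∈ X : |φ(a(x))| > γ}))^{1/r} ≤ sup_{v > 0} ψ(v) · (μ({x ∈ X : 0 < a(x) < v}))^{1/r} (with the conventions that both sides may be +∞ and 0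 · ∞ = 0). -/
open MeasureTheory Set
open scoped ENNReal

/-- Commutative version of the key operator estimate: for a σ-finite measure
space `(X, μ)`, a nonnegative measurable `a` with `μ{a = 0} = 0`, a Borel
function `φ` dominated on `[0,∞)` by a continuous decreasing `ψ` with `ψ(0) = 1`
and `ψ(v) → 0` at infinity, the weak-`L^r` quasinorm of `φ ∘ a` is bounded by
`sup_{v>0} ψ(v) · μ({0 < a < v})^{1/r}`. -/
theorem weak_Lr_bound_of_dominated (X : Type*) [MeasurableSpace X] (μ : Measure X)
    [SigmaFinite μ] (a : X → ℝ) (ha : Measurable a) (ha0 : ∀ x, 0 ≤ a x)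
    (haz : μ {x | a x = 0} = 0)
    (φ ψ : ℝ → ℝ) (hφ : Measurable φ)
    (hψc : ContinuousOn ψ (Ici 0)) (hψa : AntitoneOn ψ (Ici 0)) (hψ0 : ψ 0 = 1)
    (hpsiTop : Filter.Tendsto ψ Filter.atTop (nhds 0))
    (hdom : ∀ v : ℝ, 0 ≤ v → |φ v| ≤ ψ v)
    (r : ℝ) (hr : 1 ≤ r) :
    (⨆ (γ : ℝ) (_ : 0 < γ),
        ENNReal.ofReal γ * (μ {x | γ < |φ (a x)|}) ^ (1 / r))
      ≤ ⨆ (v : ℝ) (_ : 0 < v),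
          ENNReal.ofReal (ψ v) * (μ {x | 0 < a x ∧ a x < v}) ^ (1 / r) := by
  have hr0 : 0 < 1 / r := by positivity
  apply iSup₂_le
  intro γ hγ
  by_cases hγ1 : 1 ≤ γ
  · have hset : {x | γ < |φ (a x)|} = ∅ := by
      ext x
      simp only [mem_setOf_eq, mem_empty_iff_false, iff_false, not_lt]
      calc |φ (a x)| ≤ ψ (a x) := hdom _ (ha0 x)
        _ ≤ ψ 0 := hψa (mem_Ici.2 le_rfl) (mem_Ici.2 (ha0 x)) (ha0 x)
        _ = 1 := hψ0
        _ ≤ γ := hγ1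
    rw [hset, measure_empty, ENNReal.zero_rpow_of_pos hr0, mul_zero]
    exact zero_le
  · push_neg at hγ1
    set S : Set ℝ := {v | 0 ≤ v ∧ γ < ψ v} with hS
    have h0S : (0:ℝ) ∈ S := ⟨le_rfl, by rw [hψ0]; exact hγ1⟩
    have hbdd : BddAbove S := by
      have hev : ∀ᶠ v in Filter.atTop, ψ v < γ := hpsiTop.eventually_lt_const hγ
      obtain ⟨N, hN⟩ := Filter.eventually_atTop.1 hev
      exact ⟨N, fun v hv => le_of_not_gt fun h => absurd (hN v h.le) (not_lt.2 hv.2.le)⟩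
    set v₀ : ℝ := sSup S with hv₀
    have hv0nn : 0 ≤ v₀ := le_csSup hbdd h0S
    have hv0pos : 0 < v₀ := by
      have h1 : Filter.Tendsto ψ (nhdsWithin 0 (Ioi 0)) (nhds (ψ 0)) :=
        (hψc 0 (mem_Ici.2 le_rfl)).tendsto.mono_left
          (nhdsWithin_mono _ Ioi_subset_Ici_self)
      have h2 : ∀ᶠ v in nhdsWithin (0:ℝ) (Ioi 0), γ < ψ v :=
        h1.eventually_const_lt (by rw [hψ0]; exact hγ1)
      obtain ⟨v, hv1, hv2⟩ := (h2.and eventually_mem_nhdsWithin).exists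
      exact lt_of_lt_of_le hv2 (le_csSup hbdd ⟨(le_of_lt hv2), hv1⟩)
    have hle : ψ v₀ ≤ γ := by
      by_contra h
      push_neg at h
      have h1 : Filter.Tendsto ψ (nhdsWithin v₀ (Ioi v₀)) (nhds (ψ v₀)) :=
        (hψc v₀ (mem_Ici.2 hv0nn)).tendsto.mono_left
          (nhdsWithin_mono _ fun x hx => le_of_lt (lt_of_le_of_lt hv0nn hx))
      have h2 : ∀ᶠ v in nhdsWithin v₀ (Ioi v₀), γ < ψ v := h1.eventually_const_lt h
      obtain ⟨v, hv1, hv2⟩ := (h2.and eventually_mem_nhdsWithin).exists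
      have : v ≤ v₀ := le_csSup hbdd ⟨le_of_lt (lt_of_le_of_lt hv0nn hv2), hv1⟩
      exact absurd hv2 (not_lt.2 this)
    have hge : γ ≤ ψ v₀ := by
      have hIoo : ∀ v ∈ Ioo 0 v₀, γ < ψ v := by
        intro v hv
        obtain ⟨s, hsS, hvs⟩ := exists_lt_of_lt_csSup ⟨0, h0S⟩ hv.2
        exact lt_of_lt_of_le hsS.2 (hψa (mem_Ici.2 hv.1.le) (mem_Ici.2 hsS.1) hvs.le)
      have hmem : Ioo 0 v₀ ∈ nhdsWithin v₀ (Iio v₀) :=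
        Ioo_mem_nhdsLT_of_mem ⟨hv0pos, le_rfl⟩
      have h1 : Filter.Tendsto ψ (nhdsWithin v₀ (Iio v₀)) (nhds (ψ v₀)) :=
        (hψc v₀ (mem_Ici.2 hv0nn)).tendsto.mono_left
          ((nhdsWithin_le_of_mem hmem).trans
            (nhdsWithin_mono _ fun x hx => hx.1.le))
      refine ge_of_tendsto h1 ?_
      filter_upwards [hmem] with v hv using (hIoo v hv).le
    have hψv0 : ψ v₀ = γ := le_antisymm hle hge
    have hsub : {x | γ < |φ (a x)|} ⊆ {x | 0 < a x ∧ a x < v₀} ∪ {x | a x = 0} := by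
      intro x hx
      have h1 : γ < ψ (a x) := lt_of_lt_of_le hx (hdom _ (ha0 x))
      have hax_le : a x ≤ v₀ := le_csSup hbdd ⟨ha0 x, h1⟩
      have hax_lt : a x < v₀ := by
        rcases lt_or_eq_of_le hax_le with h | h
        · exact h
        · exfalso; rw [h, hψv0] at h1; exact lt_irrefl _ h1
      rcases eq_or_lt_of_le (ha0 x) with h | h
      · exact Or.inr h.symm
      · exact Or.inl ⟨h, hax_lt⟩
    have hμ : μ {x | γ < |φ (a x)|} ≤ μ {x | 0 < a x ∧ a x < v₀} := by
      refine (measure_mono hsub).trans ?_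
      refine (measure_union_le _ _).trans ?_
      rw [haz, add_zero]
    calc ENNReal.ofReal γ * (μ {x | γ < |φ (a x)|}) ^ (1 / r)
        ≤ ENNReal.ofReal (ψ v₀) * (μ {x | 0 < a x ∧ a x < v₀}) ^ (1 / r) := by
          rw [hψv0]
          exact mul_le_mul' le_rfl (ENNReal.rpow_le_rpow hμ hr0.le)
      _ ≤ _ := le_iSup₂_of_le v₀ hv0pos le_rfl
end
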